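/- arXiv:2512.24807 — 3 statements merged into one kernel-verified Lean document; each statement's English description precedes it below -/
import Mathlib

section
/- Assume 2β₁ ≤ d + α and that ∂D satisfies the Aikawa condition with exponent q' for some q' ∈ (β₁, d]. Then there exists C > 0 such that for all x, z ∈ D and all r, s > 0, ∫_{B_D(z,s) ∖ B(x,r)} J(x,y) dy ≤ C s^d r^{−d−α} Φ((r ∧ A₀)²/((δ_D(x) ∧ A₀)((max(δ_D(z), s)) ∧ A₀))). -/
open MeasureTheory Metric Set ENNReal Filter

noncomputable def deltaD {d : ℕ} (D : Set (EuclideanSpace ℝ (Fin d)))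
    (x : EuclideanSpace ℝ (Fin d)) : ℝ :=
  Metric.infDist x (frontier D)

def Aikawa {d : ℕ} (D : Set (EuclideanSpace ℝ (Fin d))) (q : ℝ) : Prop :=
  ∃ C₀ : ℝ, 1 ≤ C₀ ∧ ∀ x ∈ frontier D, ∀ r s : ℝ, 0 < s → s ≤ r →
    ENNReal.ofReal r < EMetric.diam (frontier D) →
    MeasureTheory.volume {y : EuclideanSpace ℝ (Fin d) |
        y ∈ Metric.ball x r ∧ Metric.infDist y (frontier D) < s} ≤
      ENNReal.ofReal (C₀ * (s / r) ^ q) * MeasureTheory.volume (Metric.ball x r)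

noncomputable def truncMin (A : ℝ≥0∞) (r : ℝ) : ℝ := (min (ENNReal.ofReal r) A).toReal



lemma tm_nonneg (A : ℝ≥0∞) (r : ℝ) : 0 ≤ truncMin A r := ENNReal.toReal_nonneg

lemma tm_eq_top {A : ℝ≥0∞} (h : A = ⊤) {r : ℝ} (hr : 0 ≤ r) : truncMin A r = r := by
  simp [truncMin, h, ENNReal.toReal_ofReal hr]

lemma tm_eq {A : ℝ≥0∞} (h : A ≠ ⊤) {r : ℝ} (hr : 0 ≤ r) :
    truncMin A r = min r A.toReal := by
  rw [truncMin, ENNReal.toReal_min ENNReal.ofReal_ne_top h, ENNReal.toReal_ofReal hr]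

lemma tm_pos {A : ℝ≥0∞} (hA : 0 < A) {r : ℝ} (hr : 0 < r) : 0 < truncMin A r := by
  by_cases h : A = ⊤
  · rw [tm_eq_top h hr.le]; exact hr
  · rw [tm_eq h hr.le]
    exact lt_min hr (ENNReal.toReal_pos hA.ne' h)

lemma tm_mono (A : ℝ≥0∞) {r t : ℝ} (hrt : r ≤ t) : truncMin A r ≤ truncMin A t := by
  refine ENNReal.toReal_mono ?_ (min_le_min (ENNReal.ofReal_le_ofReal hrt) le_rfl)
  exact ne_top_of_le_ne_top ENNReal.ofReal_ne_top (min_le_left _ _)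

lemma tm_le_self (A : ℝ≥0∞) {r : ℝ} (hr : 0 ≤ r) : truncMin A r ≤ r := by
  by_cases h : A = ⊤
  · rw [tm_eq_top h hr]
  · rw [tm_eq h hr]; exact min_le_left _ _

lemma tm_mul_le (A : ℝ≥0∞) {r t : ℝ} (hr : 0 < r) (hrt : r ≤ t) :
    truncMin A t * r ≤ truncMin A r * t := by
  by_cases h : A = ⊤
  · rw [tm_eq_top h (hr.le.trans hrt), tm_eq_top h hr.le, mul_comm]
  · rw [tm_eq h (hr.le.trans hrt), tm_eq h hr.le]
    rcases le_or_gt r A.toReal with hc | hc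
    · rw [min_eq_left hc]
      calc (min t A.toReal) * r ≤ t * r := mul_le_mul_of_nonneg_right (min_le_left _ _) hr.le
      _ = r * t := mul_comm _ _
    · rw [min_eq_right hc.le, min_eq_right (hc.le.trans hrt)]
      exact mul_le_mul_of_nonneg_left hrt ENNReal.toReal_nonneg

lemma tm_two_mul (A : ℝ≥0∞) {M : ℝ} (hM : 0 ≤ M) :
    truncMin A (2 * M) ≤ 2 * truncMin A M := by
  by_cases h : A = ⊤
  · rw [tm_eq_top h (by linarith), tm_eq_top h hM]
  · rw [tm_eq h (by linarith), tm_eq h hM]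
    rcases le_total M A.toReal with hc | hc
    · rw [min_eq_left hc]; exact min_le_left _ _
    · rw [min_eq_right hc]
      calc min (2 * M) A.toReal ≤ A.toReal := min_le_right _ _
      _ ≤ 2 * A.toReal := by nlinarith [ENNReal.toReal_nonneg (a := A)]

lemma tm_measurable (A : ℝ≥0∞) {α : Type*} [MeasurableSpace α] {f : α → ℝ}
    (hf : Measurable f) : Measurable fun y => truncMin A (f y) :=
  ENNReal.measurable_toReal.comp ((ENNReal.measurable_ofReal.comp hf).min measurable_const)


set_option maxHeartbeats 1000000 in
lemma layer_bound {d : ℕ} (hd : 1 ≤ d) (D : Set (EuclideanSpace ℝ (Fin d)))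
    (hfr : (frontier D).Nonempty) (q' C₀ : ℝ) (hq'0 : 0 < q') (hq'd : q' ≤ (d:ℝ))
    (hC₀ : 1 ≤ C₀)
    (hAik : ∀ x ∈ frontier D, ∀ r s : ℝ, 0 < s → s ≤ r →
      ENNReal.ofReal r < EMetric.diam (frontier D) →
      MeasureTheory.volume {y : EuclideanSpace ℝ (Fin d) |
          y ∈ Metric.ball x r ∧ Metric.infDist y (frontier D) < s} ≤
        ENNReal.ofReal (C₀ * (s / r) ^ q') * MeasureTheory.volume (Metric.ball x r)) :
    ∃ K : ℝ, 0 < K ∧ ∀ w ∈ frontier D, ∀ R u : ℝ, 0 < u → u ≤ R →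
      MeasureTheory.volume ({y : EuclideanSpace ℝ (Fin d) |
          Metric.infDist y (frontier D) < u} ∩ Metric.ball w R) ≤
        ENNReal.ofReal (K * (u ^ q' * R ^ ((d:ℝ) - q'))) := by
  set F := frontier D with hF
  set V₁ := MeasureTheory.volume (Metric.ball (0 : EuclideanSpace ℝ (Fin d)) 1) with hV₁
  set v₁ := V₁.toReal with hv₁
  have hV₁top : V₁ ≠ ⊤ := measure_ball_lt_top.ne
  have hv₁pos : 0 < v₁ := ENNReal.toReal_pos (measure_ball_pos _ _ one_pos).ne' hV₁top
  have hV₁eq : V₁ = ENNReal.ofReal v₁ := (ENNReal.ofReal_toReal hV₁top).symm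
  have hvol : ∀ (c : EuclideanSpace ℝ (Fin d)) (ρ : ℝ), 0 < ρ →
      MeasureTheory.volume (Metric.ball c ρ) = ENNReal.ofReal (ρ ^ ((d:ℝ)) * v₁) := by
    intro c ρ hρ
    rw [MeasureTheory.Measure.addHaar_ball_of_pos _ c hρ, finrank_euclideanSpace_fin, ← hV₁,
      hV₁eq, ← ENNReal.ofReal_mul (by positivity), ← Real.rpow_natCast ρ d]
  -- base case : R below the diameter, use Aikawa directly
  have hbase : ∀ w ∈ F, ∀ R u : ℝ, 0 < u → u ≤ R →
      ENNReal.ofReal R < EMetric.diam F →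
      MeasureTheory.volume ({y : EuclideanSpace ℝ (Fin d) |
          Metric.infDist y F < u} ∩ Metric.ball w R) ≤
        ENNReal.ofReal ((C₀ * v₁) * (u ^ q' * R ^ ((d:ℝ) - q'))) := by
    intro w hw R u hu huR hR
    have hR0 : 0 < R := hu.trans_le huR
    have h1 := hAik w hw R u hu huR hR
    have hset : {y : EuclideanSpace ℝ (Fin d) |
        y ∈ Metric.ball w R ∧ Metric.infDist y F < u} =
        {y | Metric.infDist y F < u} ∩ Metric.ball w R := by
      ext y; simp [and_comm]
    rw [hset] at h1
    refine h1.trans ?_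
    rw [hvol w R hR0, ← ENNReal.ofReal_mul (by positivity)]
    apply ENNReal.ofReal_le_ofReal
    have : C₀ * (u / R) ^ q' * (R ^ ((d:ℝ)) * v₁) =
        C₀ * v₁ * (u ^ q' * R ^ ((d:ℝ) - q')) := by
      rw [Real.div_rpow hu.le hR0.le, Real.rpow_sub hR0]; ring
    linarith [this.le]
  by_cases hdtop : EMetric.diam F = ⊤
  · refine ⟨C₀ * v₁, by positivity, fun w hw R u hu huR => ?_⟩
    exact hbase w hw R u hu huR (hdtop ▸ ENNReal.ofReal_lt_top)
  · have hbdd : Bornology.IsBounded F := Metric.isBounded_iff_ediam_ne_top.2 hdtop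
    set ρ := Metric.diam F with hρdef
    have hρ0 : 0 ≤ ρ := Metric.diam_nonneg
    have hediam : EMetric.diam F = ENNReal.ofReal ρ := (ENNReal.ofReal_toReal hdtop).symm
    rcases eq_or_lt_of_le hρ0 with hρzero | hρpos
    · -- the boundary is a single point
      obtain ⟨w₀, hw₀⟩ := hfr
      have hFsub : F = {w₀} := by
        apply Set.eq_singleton_iff_unique_mem.2 ⟨hw₀, fun a ha => ?_⟩
        have := Metric.dist_le_diam_of_mem hbdd ha hw₀
        rw [← hρdef, ← hρzero] at this
        exact dist_le_zero.1 this
      refine ⟨C₀ * v₁, by positivity, fun w hw R u hu huR => ?_⟩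
      have hsub : {y : EuclideanSpace ℝ (Fin d) | Metric.infDist y F < u}
          ∩ Metric.ball w R ⊆ Metric.ball w₀ u := by
        intro y hy
        have h := hy.1
        rw [hFsub] at h
        simp only [Set.mem_setOf_eq, Metric.infDist_singleton] at h
        exact Metric.mem_ball.2 h
      refine (measure_mono hsub).trans ?_
      rw [hvol w₀ u hu]
      apply ENNReal.ofReal_le_ofReal
      have h2 : u ^ ((d:ℝ)) = u ^ q' * u ^ ((d:ℝ) - q') := by
        rw [← Real.rpow_add hu]; ring_nf
      have h3 : u ^ ((d:ℝ) - q') ≤ R ^ ((d:ℝ) - q') :=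
        Real.rpow_le_rpow hu.le huR (by linarith)
      have h4 : (0:ℝ) ≤ u ^ q' := Real.rpow_nonneg hu.le q'
      have hXnn : (0:ℝ) ≤ u ^ q' * R ^ ((d:ℝ) - q') := by
        exact mul_nonneg h4 (Real.rpow_nonneg (hu.le.trans huR) _)
      have hA : u ^ q' * u ^ ((d:ℝ) - q') ≤ u ^ q' * R ^ ((d:ℝ) - q') :=
        mul_le_mul_of_nonneg_left h3 h4
      rw [h2]
      calc u ^ q' * u ^ ((d:ℝ) - q') * v₁
          ≤ (u ^ q' * R ^ ((d:ℝ) - q')) * v₁ := mul_le_mul_of_nonneg_right hA hv₁pos.le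
        _ = 1 * (v₁ * (u ^ q' * R ^ ((d:ℝ) - q'))) := by ring
        _ ≤ C₀ * (v₁ * (u ^ q' * R ^ ((d:ℝ) - q'))) :=
            mul_le_mul_of_nonneg_right hC₀ (mul_nonneg hv₁pos.le hXnn)
        _ = C₀ * v₁ * (u ^ q' * R ^ ((d:ℝ) - q')) := by ring
    · -- positive diameter, finite: take a finite cover of F by balls of radius ρ/4
      have hcomp : IsCompact F := Metric.isCompact_of_isClosed_isBounded isClosed_frontier hbdd
      obtain ⟨T, hTF, hTfin, hTcov⟩ := hcomp.elim_finite_subcover_image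
        (b := F) (c := fun p => Metric.ball p (ρ/4)) (fun p _ => Metric.isOpen_ball)
        (fun y hy => Set.mem_iUnion₂.2 ⟨y, hy, Metric.mem_ball_self (by positivity)⟩)
      set N := hTfin.toFinset.card with hN
      have hρdq : (0:ℝ) < ρ ^ ((d:ℝ) - q') := Real.rpow_pos_of_pos hρpos _
      set c₃ : ℝ := N * (C₀ * ((2/ρ) ^ q' * ((ρ/2) ^ ((d:ℝ)) * v₁))) with hc₃
      have hc₃0 : 0 ≤ c₃ := mul_nonneg (Nat.cast_nonneg _) (mul_nonneg (by linarith) (mul_nonneg (Real.rpow_nonneg (div_nonneg (by norm_num) hρ0) _) (mul_nonneg (Real.rpow_nonneg (div_nonneg hρ0 (by norm_num)) _) hv₁pos.le)))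
      set K₃ : ℝ := c₃ / ρ ^ ((d:ℝ) - q') with hK₃
      have hK₃0 : 0 ≤ K₃ := div_nonneg hc₃0 hρdq.le
      set K : ℝ := C₀ * v₁ + (5:ℝ) ^ ((d:ℝ)) * v₁ + K₃ with hK
      have hK0 : 0 < K := add_pos_of_pos_of_nonneg (add_pos (mul_pos (by linarith) hv₁pos) (mul_pos (Real.rpow_pos_of_pos (by norm_num) _) hv₁pos)) hK₃0
      refine ⟨K, hK0, fun w hw R u hu huR => ?_⟩
      have hR0 : 0 < R := hu.trans_le huR
      have hXnn : (0:ℝ) ≤ u ^ q' * R ^ ((d:ℝ) - q') := by positivity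
      by_cases hRd : ENNReal.ofReal R < EMetric.diam F
      · refine (hbase w hw R u hu huR hRd).trans (ENNReal.ofReal_le_ofReal ?_)
        apply mul_le_mul_of_nonneg_right _ hXnn
        nlinarith [Real.rpow_nonneg (by norm_num : (0:ℝ) ≤ 5) ((d:ℝ))]
      · have hρR : ρ ≤ R := by
          have h5 : EMetric.diam F ≤ ENNReal.ofReal R := not_lt.1 hRd
          rw [hediam] at h5
          exact (ENNReal.ofReal_le_ofReal_iff hR0.le).1 h5
        by_cases hu4 : u ≤ ρ/4
        · -- small u : use the net and Aikawa at scale ρ/2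
          have hsubset : {y : EuclideanSpace ℝ (Fin d) | Metric.infDist y F < u} ⊆
              ⋃ p ∈ hTfin.toFinset, ({y : EuclideanSpace ℝ (Fin d) |
                Metric.infDist y F < u} ∩ Metric.ball p (ρ/2)) := by
            intro y hy
            obtain ⟨f, hf, hdf⟩ := (Metric.infDist_lt_iff hfr).1 hy
            obtain ⟨p, hp, hfp⟩ := Set.mem_iUnion₂.1 (hTcov hf)
            refine Set.mem_iUnion₂.2 ⟨p, hTfin.mem_toFinset.2 hp, hy, ?_⟩
            have h6 : dist y p ≤ dist y f + dist f p := dist_triangle _ _ _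
            have h7 : dist f p < ρ/4 := Metric.mem_ball.1 hfp
            have : dist y p < ρ/2 := by linarith
            exact Metric.mem_ball.2 this
          have hterm : ∀ p ∈ hTfin.toFinset,
              MeasureTheory.volume ({y : EuclideanSpace ℝ (Fin d) |
                Metric.infDist y F < u} ∩ Metric.ball p (ρ/2)) ≤
              ENNReal.ofReal (C₀ * (u/(ρ/2)) ^ q' * ((ρ/2) ^ ((d:ℝ)) * v₁)) := by
            intro p hp
            have hpF : p ∈ F := hTF (hTfin.mem_toFinset.1 hp)
            have h8 := hAik p hpF (ρ/2) u hu (by linarith)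
              (by rw [hediam]; exact ENNReal.ofReal_lt_ofReal_iff hρpos |>.2 (by linarith))
            have hset : {y : EuclideanSpace ℝ (Fin d) |
                y ∈ Metric.ball p (ρ/2) ∧ Metric.infDist y F < u} =
                {y | Metric.infDist y F < u} ∩ Metric.ball p (ρ/2) := by
              ext y; simp [and_comm]
            rw [hset] at h8
            refine h8.trans ?_
            rw [hvol p (ρ/2) (by linarith), ← ENNReal.ofReal_mul (by positivity)]
          calc MeasureTheory.volume ({y : EuclideanSpace ℝ (Fin d) |
                Metric.infDist y F < u} ∩ Metric.ball w R)
              ≤ MeasureTheory.volume (⋃ p ∈ hTfin.toFinset,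
                ({y : EuclideanSpace ℝ (Fin d) | Metric.infDist y F < u}
                  ∩ Metric.ball p (ρ/2))) :=
                measure_mono (Set.inter_subset_left.trans hsubset)
            _ ≤ ∑ p ∈ hTfin.toFinset, MeasureTheory.volume
                ({y : EuclideanSpace ℝ (Fin d) | Metric.infDist y F < u}
                  ∩ Metric.ball p (ρ/2)) := measure_biUnion_finset_le _ _
            _ ≤ ∑ p ∈ hTfin.toFinset,
                ENNReal.ofReal (C₀ * (u/(ρ/2)) ^ q' * ((ρ/2) ^ ((d:ℝ)) * v₁)) :=
                Finset.sum_le_sum hterm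
            _ = (N : ℝ≥0∞) * ENNReal.ofReal (C₀ * (u/(ρ/2)) ^ q' * ((ρ/2) ^ ((d:ℝ)) * v₁)) := by
                rw [Finset.sum_const, hN, nsmul_eq_mul]
            _ ≤ ENNReal.ofReal (K * (u ^ q' * R ^ ((d:ℝ) - q'))) := by
                rw [← ENNReal.ofReal_natCast N, ← ENNReal.ofReal_mul (Nat.cast_nonneg N)]
                apply ENNReal.ofReal_le_ofReal
                have h9 : u/(ρ/2) = u * (2/ρ) := by field_simp
                have h10 : (u * (2/ρ)) ^ q' = u ^ q' * (2/ρ) ^ q' :=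
                  Real.mul_rpow hu.le (by positivity)
                have h11 : (N:ℝ) * (C₀ * (u/(ρ/2)) ^ q' * ((ρ/2) ^ ((d:ℝ)) * v₁)) =
                    c₃ * u ^ q' := by rw [h9, h10, hc₃]; ring
                rw [h11]
                have h12 : c₃ = K₃ * ρ ^ ((d:ℝ) - q') := by
                  rw [hK₃, div_mul_cancel₀ _ hρdq.ne']
                have h13 : ρ ^ ((d:ℝ) - q') ≤ R ^ ((d:ℝ) - q') :=
                  Real.rpow_le_rpow hρ0 hρR (by linarith)
                have h14 : (0:ℝ) ≤ u ^ q' := Real.rpow_nonneg hu.le _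
                have h15 : K₃ ≤ K := by
                  rw [hK]; nlinarith [Real.rpow_nonneg (by norm_num : (0:ℝ) ≤ 5) ((d:ℝ))]
                calc c₃ * u ^ q' = K₃ * ρ ^ ((d:ℝ) - q') * u ^ q' := by rw [← h12]
                  _ ≤ K₃ * R ^ ((d:ℝ) - q') * u ^ q' :=
                      mul_le_mul_of_nonneg_right (mul_le_mul_of_nonneg_left h13 hK₃0) h14
                  _ ≤ K * (u ^ q' * R ^ ((d:ℝ) - q')) := by nlinarith [Real.rpow_nonneg hR0.le ((d:ℝ) - q')]
        · -- large u : everything is inside a ball of radius 5u around w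
          push_neg at hu4
          have hsub : {y : EuclideanSpace ℝ (Fin d) | Metric.infDist y F < u}
              ∩ Metric.ball w R ⊆ Metric.ball w (5*u) := by
            rintro y ⟨hy1, _⟩
            obtain ⟨f, hf, hdf⟩ := (Metric.infDist_lt_iff hfr).1 hy1
            have h16 : dist f w ≤ ρ := Metric.dist_le_diam_of_mem hbdd hf hw
            have h17 : dist y w ≤ dist y f + dist f w := dist_triangle _ _ _
            exact Metric.mem_ball.2 (by linarith)
          refine (measure_mono hsub).trans ?_
          rw [hvol w (5*u) (by linarith)]
          apply ENNReal.ofReal_le_ofReal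
          have h18 : (5*u) ^ ((d:ℝ)) = 5 ^ ((d:ℝ)) * u ^ ((d:ℝ)) :=
            Real.mul_rpow (by norm_num) hu.le
          have h19 : u ^ ((d:ℝ)) = u ^ q' * u ^ ((d:ℝ) - q') := by
            rw [← Real.rpow_add hu]; ring_nf
          have h20 : u ^ ((d:ℝ) - q') ≤ R ^ ((d:ℝ) - q') :=
            Real.rpow_le_rpow hu.le huR (by linarith)
          have h21 : (0:ℝ) ≤ u ^ q' := Real.rpow_nonneg hu.le _
          have h22 : (0:ℝ) ≤ (5:ℝ) ^ ((d:ℝ)) := Real.rpow_nonneg (by norm_num) _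
          rw [h18, h19]
          have h23 : 5 ^ ((d:ℝ)) * (u ^ q' * u ^ ((d:ℝ) - q')) * v₁ ≤
              5 ^ ((d:ℝ)) * (u ^ q' * R ^ ((d:ℝ) - q')) * v₁ := by
            apply mul_le_mul_of_nonneg_right _ hv₁pos.le
            apply mul_le_mul_of_nonneg_left _ h22
            exact mul_le_mul_of_nonneg_left h20 h21
          have h25 : 5 ^ ((d:ℝ)) * v₁ ≤ K := by
            rw [hK]; nlinarith [hv₁pos, hK₃0, hC₀]
          calc 5 ^ ((d:ℝ)) * (u ^ q' * u ^ ((d:ℝ) - q')) * v₁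
              ≤ 5 ^ ((d:ℝ)) * (u ^ q' * R ^ ((d:ℝ) - q')) * v₁ := h23
            _ = (5 ^ ((d:ℝ)) * v₁) * (u ^ q' * R ^ ((d:ℝ) - q')) := by ring
            _ ≤ K * (u ^ q' * R ^ ((d:ℝ) - q')) := mul_le_mul_of_nonneg_right h25 hXnn


lemma infDist_frontier_pos {d : ℕ} {D : Set (EuclideanSpace ℝ (Fin d))}
    (hDopen : IsOpen D) (hfr : (frontier D).Nonempty) {x : EuclideanSpace ℝ (Fin d)}
    (hx : x ∈ D) : 0 < Metric.infDist x (frontier D) := by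
  refine (isClosed_frontier.notMem_iff_infDist_pos hfr).1 ?_
  intro hxf
  rw [hDopen.frontier_eq] at hxf
  exact hxf.2 hx

lemma geom_term {a β₁ q' dd K : ℝ} (ha : 0 < a) (k : ℕ) :
    (a / 2 ^ (k+1)) ^ (-β₁) * (K * ((a / 2 ^ k) ^ q' * a ^ (dd - q'))) =
    (K * 2 ^ β₁ * a ^ (dd - β₁)) * ((2:ℝ) ^ (β₁ - q')) ^ k := by
  have h2k : (0:ℝ) < 2 ^ k := by positivity
  have key : ∀ (y e : ℝ), 0 < y → (a / y) ^ e = a ^ e * y ^ (-e) := by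
    intro y e hy
    rw [Real.div_rpow ha.le hy.le, Real.rpow_neg hy.le, div_eq_mul_inv]
  rw [key _ _ (by positivity), key _ _ h2k, neg_neg]
  have e3 : ((2:ℝ) ^ (k+1) : ℝ) ^ β₁ = 2 ^ β₁ * ((2:ℝ) ^ k) ^ β₁ := by
    rw [pow_succ, Real.mul_rpow (by positivity) (by norm_num), mul_comm]
  have e4 : ((2:ℝ) ^ k) ^ β₁ * ((2:ℝ) ^ k) ^ (-q') = ((2:ℝ) ^ (β₁ - q')) ^ k := by
    rw [← Real.rpow_add h2k, ← Real.rpow_natCast (2:ℝ) k,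
      ← Real.rpow_mul (by norm_num : (0:ℝ) ≤ 2),
      ← Real.rpow_natCast ((2:ℝ) ^ (β₁ - q')) k,
      ← Real.rpow_mul (by norm_num : (0:ℝ) ≤ 2)]
    congr 1
    ring
  have e5 : a ^ (-β₁) * (a ^ q' * a ^ (dd - q')) = a ^ (dd - β₁) := by
    rw [← Real.rpow_add ha, ← Real.rpow_add ha]
    congr 1
    ring
  calc a ^ (-β₁) * (2 ^ (k+1) : ℝ) ^ β₁ * (K * (a ^ q' * ((2:ℝ) ^ k) ^ (-q') * a ^ (dd - q')))
      = (K * ((2:ℝ)^(k+1)) ^ β₁ ) * (a ^ (-β₁) * (a ^ q' * a ^ (dd - q'))) *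
          ((2:ℝ) ^ k) ^ (-q') := by ring
    _ = (K * (2 ^ β₁ * ((2:ℝ) ^ k) ^ β₁)) * a ^ (dd - β₁) * ((2:ℝ) ^ k) ^ (-q') := by
        rw [e3, e5]
    _ = (K * 2 ^ β₁ * a ^ (dd - β₁)) * (((2:ℝ) ^ k) ^ β₁ * ((2:ℝ) ^ k) ^ (-q')) := by ring
    _ = (K * 2 ^ β₁ * a ^ (dd - β₁)) * ((2:ℝ) ^ (β₁ - q')) ^ k := by rw [e4]

lemma dyadic_bound {d : ℕ} {D : Set (EuclideanSpace ℝ (Fin d))}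
    (hDopen : IsOpen D) (hfr : (frontier D).Nonempty)
    {β₁ q' : ℝ} (hβ₁pos : 0 < β₁) (hβq' : β₁ < q')
    {K : ℝ} (hK0 : 0 < K)
    (hlayer : ∀ w ∈ frontier D, ∀ R u : ℝ, 0 < u → u ≤ R →
      MeasureTheory.volume ({y : EuclideanSpace ℝ (Fin d) |
          Metric.infDist y (frontier D) < u} ∩ Metric.ball w R) ≤
        ENNReal.ofReal (K * (u ^ q' * R ^ ((d:ℝ) - q')))) :
    ∀ (z : EuclideanSpace ℝ (Fin d)) (s : ℝ), 0 < s →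
      Metric.infDist z (frontier D) < 2*s →
      (∫⁻ y in D ∩ Metric.ball z s,
        ENNReal.ofReal ((Metric.infDist y (frontier D)) ^ (-β₁))) ≤
      ENNReal.ofReal ((K * 2 ^ β₁ * (1 - (2:ℝ) ^ (β₁ - q'))⁻¹) * (3*s) ^ ((d:ℝ) - β₁)) := by
  intro z s hs hz2s
  set F := frontier D with hF
  set δ : EuclideanSpace ℝ (Fin d) → ℝ := fun y => Metric.infDist y F with hδ
  have hδcont : Continuous δ := Metric.continuous_infDist_pt F
  obtain ⟨w, hw, hzw⟩ := (Metric.infDist_lt_iff hfr).1 hz2s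
  set E : Set (EuclideanSpace ℝ (Fin d)) := D ∩ Metric.ball z s with hE
  set A : ℕ → Set (EuclideanSpace ℝ (Fin d)) :=
    fun k => E ∩ δ ⁻¹' (Set.Ico (3*s/2^(k+1)) (3*s/2^k)) with hA
  have hAmeas : ∀ k, MeasurableSet (A k) := fun k =>
    (hDopen.measurableSet.inter measurableSet_ball).inter
      (hδcont.measurable measurableSet_Ico)
  have hcover : E ⊆ ⋃ k, A k := by
    intro y hy
    have hδpos : 0 < δ y := infDist_frontier_pos hDopen hfr hy.1
    have hδlt : δ y < 3*s := by
      have h1 : δ y ≤ δ z + dist y z := Metric.infDist_le_infDist_add_dist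
      have h2 : dist y z < s := Metric.mem_ball.1 hy.2
      have h3 : δ z < 2*s := hz2s
      linarith
    have hex : ∃ k : ℕ, 3*s/2^(k+1) ≤ δ y := by
      obtain ⟨n, hn⟩ := pow_unbounded_of_one_lt (3*s/δ y) (by norm_num : (1:ℝ) < 2)
      refine ⟨n, ?_⟩
      rw [div_le_iff₀ (by positivity)]
      rw [div_lt_iff₀ hδpos] at hn
      have : (2:ℝ)^n ≤ 2^(n+1) := by
        apply pow_le_pow_right₀ (by norm_num) (by omega)
      nlinarith
    classical
    set k := Nat.find hex with hk
    have hk1 : 3*s/2^(k+1) ≤ δ y := Nat.find_spec hex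
    have hk2 : δ y < 3*s/2^k := by
      rcases Nat.eq_zero_or_pos k with h0 | h0
      · rw [h0]; simpa using hδlt
      · have := Nat.find_min hex (m := k - 1) (by omega)
        push_neg at this
        have hkk : k - 1 + 1 = k := by omega
        rwa [hkk] at this
    exact Set.mem_iUnion.2 ⟨k, hy, hk1, hk2⟩
  have hsum : (∫⁻ y in E, ENNReal.ofReal ((δ y) ^ (-β₁))) ≤
      ∑' k, ∫⁻ y in A k, ENNReal.ofReal ((δ y) ^ (-β₁)) :=
    le_trans (lintegral_mono_set hcover) (lintegral_iUnion_le _ _)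
  have hterm : ∀ k : ℕ, (∫⁻ y in A k, ENNReal.ofReal ((δ y) ^ (-β₁))) ≤
      ENNReal.ofReal ((K * 2 ^ β₁ * (3*s) ^ ((d:ℝ) - β₁)) * ((2:ℝ) ^ (β₁ - q')) ^ k) := by
    intro k
    have hlo : (0:ℝ) < 3*s/2^(k+1) := by positivity
    have hpt : ∀ y ∈ A k, ENNReal.ofReal ((δ y) ^ (-β₁)) ≤
        ENNReal.ofReal ((3*s/2^(k+1)) ^ (-β₁)) := by
      intro y hy
      exact ENNReal.ofReal_le_ofReal
        (Real.rpow_le_rpow_of_nonpos hlo hy.2.1 (by linarith))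
    calc (∫⁻ y in A k, ENNReal.ofReal ((δ y) ^ (-β₁)))
        ≤ ∫⁻ _ in A k, ENNReal.ofReal ((3*s/2^(k+1)) ^ (-β₁)) :=
          setLIntegral_mono' (hAmeas k) hpt
      _ = ENNReal.ofReal ((3*s/2^(k+1)) ^ (-β₁)) * MeasureTheory.volume (A k) :=
          setLIntegral_const _ _
      _ ≤ ENNReal.ofReal ((3*s/2^(k+1)) ^ (-β₁)) *
          ENNReal.ofReal (K * ((3*s/2^k) ^ q' * (3*s) ^ ((d:ℝ) - q'))) := by
          apply mul_le_mul_right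
          have hsub : A k ⊆ {y : EuclideanSpace ℝ (Fin d) | δ y < 3*s/2^k}
              ∩ Metric.ball w (3*s) := by
            rintro y ⟨⟨hyD, hyb⟩, hyI⟩
            refine ⟨(Set.mem_Ico.1 hyI).2, ?_⟩
            have h4 : dist y w ≤ dist y z + dist z w := dist_triangle _ _ _
            have h5 : dist y z < s := Metric.mem_ball.1 hyb
            exact Metric.mem_ball.2 (by linarith)
          refine (measure_mono hsub).trans ?_
          exact hlayer w hw (3*s) (3*s/2^k) (by positivity)
            (by rw [div_le_iff₀ (by positivity)]; nlinarith [one_le_pow₀ (by norm_num : (1:ℝ) ≤ 2) (n := k), hs])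
      _ = ENNReal.ofReal ((3*s/2^(k+1)) ^ (-β₁) *
          (K * ((3*s/2^k) ^ q' * (3*s) ^ ((d:ℝ) - q')))) :=
          (ENNReal.ofReal_mul (by positivity)).symm
      _ = ENNReal.ofReal ((K * 2 ^ β₁ * (3*s) ^ ((d:ℝ) - β₁)) * ((2:ℝ) ^ (β₁ - q')) ^ k) := by
          rw [geom_term (by positivity) k]
  set θ : ℝ := (2:ℝ) ^ (β₁ - q') with hθ
  have hθ0 : 0 < θ := Real.rpow_pos_of_pos (by norm_num) _
  have hθ1 : θ < 1 := Real.rpow_lt_one_of_one_lt_of_neg (by norm_num) (by linarith)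
  set Kb : ℝ := K * 2 ^ β₁ * (3*s) ^ ((d:ℝ) - β₁) with hKb
  have hKb0 : 0 ≤ Kb := by positivity
  have hgeom : ∑' k : ℕ, ENNReal.ofReal (Kb * θ ^ k) =
      ENNReal.ofReal Kb * (1 - ENNReal.ofReal θ)⁻¹ := by
    have h6 : ∀ k : ℕ, ENNReal.ofReal (Kb * θ ^ k) =
        ENNReal.ofReal Kb * (ENNReal.ofReal θ) ^ k := by
      intro k
      rw [ENNReal.ofReal_mul hKb0, ENNReal.ofReal_pow hθ0.le]
    simp_rw [h6]
    rw [ENNReal.tsum_mul_left, ENNReal.tsum_geometric]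
  have hfin : (1 - ENNReal.ofReal θ)⁻¹ = ENNReal.ofReal ((1-θ)⁻¹) := by
    rw [ENNReal.ofReal_inv_of_pos (by linarith), ENNReal.ofReal_sub _ hθ0.le,
      ENNReal.ofReal_one]
  calc (∫⁻ y in E, ENNReal.ofReal ((δ y) ^ (-β₁)))
      ≤ ∑' k, ∫⁻ y in A k, ENNReal.ofReal ((δ y) ^ (-β₁)) := hsum
    _ ≤ ∑' k : ℕ, ENNReal.ofReal (Kb * θ ^ k) := ENNReal.tsum_le_tsum hterm
    _ = ENNReal.ofReal Kb * ENNReal.ofReal ((1-θ)⁻¹) := by rw [hgeom, hfin]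
    _ = ENNReal.ofReal (Kb * (1-θ)⁻¹) := (ENNReal.ofReal_mul hKb0).symm
    _ = ENNReal.ofReal ((K * 2 ^ β₁ * (1 - θ)⁻¹) * (3*s) ^ ((d:ℝ) - β₁)) := by
        rw [hKb]; ring_nf

set_option maxHeartbeats 1000000 in
lemma ratio_integral_bound {d : ℕ} {D : Set (EuclideanSpace ℝ (Fin d))}
    (hDopen : IsOpen D) (hfr : (frontier D).Nonempty)
    {A₀ : ℝ≥0∞} (hA₀ : 0 < A₀)
    {β₁ q' : ℝ} (hβ₁ : 0 ≤ β₁) (hβq' : β₁ < q')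
    {K : ℝ} (hK0 : 0 < K)
    (hlayer : ∀ w ∈ frontier D, ∀ R u : ℝ, 0 < u → u ≤ R →
      MeasureTheory.volume ({y : EuclideanSpace ℝ (Fin d) |
          Metric.infDist y (frontier D) < u} ∩ Metric.ball w R) ≤
        ENNReal.ofReal (K * (u ^ q' * R ^ ((d:ℝ) - q')))) :
    ∃ K2 : ℝ, 0 < K2 ∧ ∀ z ∈ D, ∀ s : ℝ, 0 < s →
      (∫⁻ y in D ∩ Metric.ball z s, ENNReal.ofReal
        ((truncMin A₀ (max (Metric.infDist z (frontier D)) s) /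
          truncMin A₀ (Metric.infDist y (frontier D))) ^ β₁)) ≤
      ENNReal.ofReal (K2 * s ^ ((d:ℝ))) := by
  set F := frontier D with hF
  set δ : EuclideanSpace ℝ (Fin d) → ℝ := fun y => Metric.infDist y F with hδdef
  have hδcont : Continuous δ := Metric.continuous_infDist_pt F
  set V₁ := MeasureTheory.volume (Metric.ball (0 : EuclideanSpace ℝ (Fin d)) 1) with hV₁
  set v₁ := V₁.toReal with hv₁
  have hV₁top : V₁ ≠ ⊤ := measure_ball_lt_top.ne
  have hv₁pos : 0 < v₁ := ENNReal.toReal_pos (measure_ball_pos _ _ one_pos).ne' hV₁top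
  have hV₁eq : V₁ = ENNReal.ofReal v₁ := (ENNReal.ofReal_toReal hV₁top).symm
  have hvol : ∀ (c : EuclideanSpace ℝ (Fin d)) (ρ : ℝ), 0 < ρ →
      MeasureTheory.volume (Metric.ball c ρ) = ENNReal.ofReal (ρ ^ ((d:ℝ)) * v₁) := by
    intro c ρ hρ
    rw [MeasureTheory.Measure.addHaar_ball_of_pos _ c hρ, finrank_euclideanSpace_fin, ← hV₁,
      hV₁eq, ← ENNReal.ofReal_mul (by positivity), ← Real.rpow_natCast ρ d]
  set Kdy : ℝ := K * 2 ^ β₁ * (1 - (2:ℝ) ^ (β₁ - q'))⁻¹ with hKdy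
  have hθ1 : (2:ℝ) ^ (β₁ - q') < 1 :=
    Real.rpow_lt_one_of_one_lt_of_neg (by norm_num) (by linarith)
  have hKdy0 : 0 < Kdy := by
    apply mul_pos (mul_pos hK0 (Real.rpow_pos_of_pos (by norm_num) _))
    rw [inv_pos]; linarith
  set B2 : ℝ := 2 ^ β₁ * v₁ + Kdy * 2 ^ β₁ * 3 ^ ((d:ℝ)) with hB2
  have h2β : (0:ℝ) < 2 ^ β₁ := Real.rpow_pos_of_pos (by norm_num) _
  have h3d : (0:ℝ) < 3 ^ ((d:ℝ)) := Real.rpow_pos_of_pos (by norm_num) _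
  have hB20 : 0 < B2 := by positivity
  refine ⟨v₁ + B2, by positivity, fun z hz s hs => ?_⟩
  set M : ℝ := max (Metric.infDist z F) s with hM
  have hδz : 0 < Metric.infDist z F := infDist_frontier_pos hDopen hfr hz
  have hM0 : 0 < M := lt_of_lt_of_le hs (le_max_right _ _)
  set E : Set (EuclideanSpace ℝ (Fin d)) := D ∩ Metric.ball z s with hE
  have hEmeas : MeasurableSet E := hDopen.measurableSet.inter measurableSet_ball
  have hEvol : MeasureTheory.volume E ≤ ENNReal.ofReal (s ^ ((d:ℝ)) * v₁) := by
    rw [← hvol z s hs]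
    exact measure_mono Set.inter_subset_right
  have hδy : ∀ y ∈ E, 0 < δ y := fun y hy => infDist_frontier_pos hDopen hfr hy.1
  have hsd : (0:ℝ) < s ^ ((d:ℝ)) := Real.rpow_pos_of_pos hs _
  -- pointwise bound by 1 + (M/δ)^β₁
  have hpt : ∀ y ∈ E, ENNReal.ofReal ((truncMin A₀ M / truncMin A₀ (δ y)) ^ β₁) ≤
      1 + ENNReal.ofReal ((M / δ y) ^ β₁) := by
    intro y hy
    have hδy' := hδy y hy
    have htmy : 0 < truncMin A₀ (δ y) := tm_pos hA₀ hδy'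
    have hMδnn : 0 ≤ M / δ y := by positivity
    rcases le_or_gt (δ y) M with hc | hc
    · have h1 : truncMin A₀ M * δ y ≤ truncMin A₀ (δ y) * M := tm_mul_le A₀ hδy' hc
      have h2 : truncMin A₀ M / truncMin A₀ (δ y) ≤ M / δ y := by
        rw [div_le_div_iff₀ htmy hδy']
        linarith
      refine le_trans (ENNReal.ofReal_le_ofReal
        (Real.rpow_le_rpow (div_nonneg (tm_nonneg _ _) htmy.le) h2 hβ₁)) ?_
      exact le_add_self
    · have h1 : truncMin A₀ M ≤ truncMin A₀ (δ y) := tm_mono A₀ hc.le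
      have h2 : truncMin A₀ M / truncMin A₀ (δ y) ≤ 1 := by
        rw [div_le_one htmy]; exact h1
      have h3 : (truncMin A₀ M / truncMin A₀ (δ y)) ^ β₁ ≤ 1 :=
        Real.rpow_le_one (div_nonneg (tm_nonneg _ _) htmy.le) h2 hβ₁
      calc ENNReal.ofReal ((truncMin A₀ M / truncMin A₀ (δ y)) ^ β₁)
          ≤ ENNReal.ofReal 1 := ENNReal.ofReal_le_ofReal h3
        _ = 1 := ENNReal.ofReal_one
        _ ≤ 1 + ENNReal.ofReal ((M / δ y) ^ β₁) := le_self_add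
  have hgmeas : Measurable fun y => ENNReal.ofReal ((M / δ y) ^ β₁) := by
    apply ENNReal.measurable_ofReal.comp
    exact ((measurable_const.div hδcont.measurable).pow_const _)
  have h1 : (∫⁻ y in E, ENNReal.ofReal ((truncMin A₀ M / truncMin A₀ (δ y)) ^ β₁)) ≤
      MeasureTheory.volume E + ∫⁻ y in E, ENNReal.ofReal ((M / δ y) ^ β₁) := by
    calc (∫⁻ y in E, ENNReal.ofReal ((truncMin A₀ M / truncMin A₀ (δ y)) ^ β₁))
        ≤ ∫⁻ y in E, (1 + ENNReal.ofReal ((M / δ y) ^ β₁)) := setLIntegral_mono' hEmeas hpt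
      _ = (∫⁻ _ in E, (1:ℝ≥0∞)) + ∫⁻ y in E, ENNReal.ofReal ((M / δ y) ^ β₁) :=
          lintegral_add_left measurable_const _
      _ = MeasureTheory.volume E + ∫⁻ y in E, ENNReal.ofReal ((M / δ y) ^ β₁) := by
          rw [setLIntegral_const, one_mul]
  have h2 : (∫⁻ y in E, ENNReal.ofReal ((M / δ y) ^ β₁)) ≤
      ENNReal.ofReal (B2 * s ^ ((d:ℝ))) := by
    rcases eq_or_lt_of_le hβ₁ with hβ0 | hβpos
    · -- β₁ = 0
      have : ∀ y, ENNReal.ofReal ((M / δ y) ^ β₁) = 1 := by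
        intro y; rw [← hβ0, Real.rpow_zero, ENNReal.ofReal_one]
      simp_rw [this]
      rw [setLIntegral_const, one_mul]
      refine hEvol.trans (ENNReal.ofReal_le_ofReal ?_)
      have h2β1 : (1:ℝ) ≤ 2 ^ β₁ := Real.one_le_rpow (by norm_num) hβ₁
      have hB2' : v₁ ≤ B2 := by
        rw [hB2]
        nlinarith [mul_nonneg (mul_nonneg hKdy0.le h2β.le) h3d.le,
          mul_nonneg (by linarith : (0:ℝ) ≤ 2 ^ β₁ - 1) hv₁pos.le]
      calc s ^ ((d:ℝ)) * v₁ = v₁ * s ^ ((d:ℝ)) := by ring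
        _ ≤ B2 * s ^ ((d:ℝ)) := mul_le_mul_of_nonneg_right hB2' hsd.le
    · rcases le_or_gt (2*s) (Metric.infDist z F) with hcase | hcase
      · -- far from the boundary
        have hMz : M = Metric.infDist z F := max_eq_left (by linarith)
        have hptc : ∀ y ∈ E, ENNReal.ofReal ((M / δ y) ^ β₁) ≤
            ENNReal.ofReal (2 ^ β₁) := by
          intro y hy
          have hδy' := hδy y hy
          have hlow : Metric.infDist z F ≤ δ y + dist z y :=
            Metric.infDist_le_infDist_add_dist
          have hdzy : dist z y < s := by
            have := Metric.mem_ball.1 hy.2; rwa [dist_comm] at this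
          have hratio : M / δ y ≤ 2 := by
            rw [hMz, div_le_iff₀ hδy']
            linarith
          exact ENNReal.ofReal_le_ofReal
            (Real.rpow_le_rpow (by positivity) hratio hβ₁)
        calc (∫⁻ y in E, ENNReal.ofReal ((M / δ y) ^ β₁))
            ≤ ∫⁻ _ in E, ENNReal.ofReal (2 ^ β₁) := setLIntegral_mono' hEmeas hptc
          _ = ENNReal.ofReal (2 ^ β₁) * MeasureTheory.volume E := setLIntegral_const _ _
          _ ≤ ENNReal.ofReal (2 ^ β₁) * ENNReal.ofReal (s ^ ((d:ℝ)) * v₁) :=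
              mul_le_mul_right hEvol _
          _ = ENNReal.ofReal (2 ^ β₁ * (s ^ ((d:ℝ)) * v₁)) :=
              (ENNReal.ofReal_mul (by positivity)).symm
          _ ≤ ENNReal.ofReal (B2 * s ^ ((d:ℝ))) := by
              apply ENNReal.ofReal_le_ofReal
              have h2v : 2 ^ β₁ * v₁ ≤ B2 := by
                rw [hB2]
                nlinarith [mul_nonneg (mul_nonneg hKdy0.le h2β.le) h3d.le]
              calc 2 ^ β₁ * (s ^ ((d:ℝ)) * v₁) = (2 ^ β₁ * v₁) * s ^ ((d:ℝ)) := by ring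
                _ ≤ B2 * s ^ ((d:ℝ)) := mul_le_mul_of_nonneg_right h2v hsd.le
      · -- close to the boundary : use the dyadic bound
        have hM2s : M ≤ 2*s := max_le (by linarith) (by linarith)
        have hptd : ∀ y ∈ E, ENNReal.ofReal ((M / δ y) ^ β₁) ≤
            ENNReal.ofReal (M ^ β₁) * ENNReal.ofReal ((δ y) ^ (-β₁)) := by
          intro y hy
          have hδy' := hδy y hy
          have heq : (M / δ y) ^ β₁ = M ^ β₁ * (δ y) ^ (-β₁) := by
            rw [Real.div_rpow hM0.le hδy'.le, Real.rpow_neg hδy'.le, div_eq_mul_inv]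
          rw [heq, ENNReal.ofReal_mul (by positivity)]
        have hδmeas : Measurable fun y => ENNReal.ofReal ((δ y) ^ (-β₁)) :=
          ENNReal.measurable_ofReal.comp (hδcont.measurable.pow_const _)
        calc (∫⁻ y in E, ENNReal.ofReal ((M / δ y) ^ β₁))
            ≤ ∫⁻ y in E, ENNReal.ofReal (M ^ β₁) * ENNReal.ofReal ((δ y) ^ (-β₁)) :=
              setLIntegral_mono' hEmeas hptd
          _ = ENNReal.ofReal (M ^ β₁) * ∫⁻ y in E, ENNReal.ofReal ((δ y) ^ (-β₁)) :=
              lintegral_const_mul _ hδmeas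
          _ ≤ ENNReal.ofReal (M ^ β₁) *
              ENNReal.ofReal (Kdy * (3*s) ^ ((d:ℝ) - β₁)) :=
              mul_le_mul_right (dyadic_bound hDopen hfr hβpos hβq' hK0 hlayer z s hs hcase) _
          _ = ENNReal.ofReal (M ^ β₁ * (Kdy * (3*s) ^ ((d:ℝ) - β₁))) :=
              (ENNReal.ofReal_mul (by positivity)).symm
          _ ≤ ENNReal.ofReal (B2 * s ^ ((d:ℝ))) := by
              apply ENNReal.ofReal_le_ofReal
              have e1 : M ^ β₁ ≤ (2*s) ^ β₁ := Real.rpow_le_rpow hM0.le hM2s hβ₁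
              have e2 : (2*s) ^ β₁ = 2 ^ β₁ * s ^ β₁ := Real.mul_rpow (by norm_num) hs.le
              have e3 : (3*s) ^ ((d:ℝ) - β₁) = 3 ^ ((d:ℝ) - β₁) * s ^ ((d:ℝ) - β₁) :=
                Real.mul_rpow (by norm_num) hs.le
              have e4 : (3:ℝ) ^ ((d:ℝ) - β₁) ≤ 3 ^ ((d:ℝ)) :=
                Real.rpow_le_rpow_of_exponent_le (by norm_num) (by linarith)
              have e5 : s ^ β₁ * s ^ ((d:ℝ) - β₁) = s ^ ((d:ℝ)) := by
                rw [← Real.rpow_add hs]; congr 1; ring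
              have hsβ : (0:ℝ) < s ^ β₁ := Real.rpow_pos_of_pos hs _
              have hsdβ : (0:ℝ) < s ^ ((d:ℝ) - β₁) := Real.rpow_pos_of_pos hs _
              calc M ^ β₁ * (Kdy * (3*s) ^ ((d:ℝ) - β₁))
                  ≤ (2*s) ^ β₁ * (Kdy * (3*s) ^ ((d:ℝ) - β₁)) := by
                    apply mul_le_mul_of_nonneg_right e1 (by positivity)
                _ = Kdy * (2 ^ β₁ * (3 ^ ((d:ℝ) - β₁)) ) * (s ^ β₁ * s ^ ((d:ℝ) - β₁)) := by
                    rw [e2, e3]; ring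
                _ ≤ Kdy * (2 ^ β₁ * 3 ^ ((d:ℝ))) * (s ^ β₁ * s ^ ((d:ℝ) - β₁)) := by
                    apply mul_le_mul_of_nonneg_right _ (by positivity)
                    apply mul_le_mul_of_nonneg_left _ hKdy0.le
                    exact mul_le_mul_of_nonneg_left e4 h2β.le
                _ = (Kdy * 2 ^ β₁ * 3 ^ ((d:ℝ))) * s ^ ((d:ℝ)) := by rw [e5]; ring
                _ ≤ B2 * s ^ ((d:ℝ)) := by
                    apply mul_le_mul_of_nonneg_right _ hsd.le
                    nlinarith [mul_pos h2β hv₁pos]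
  calc (∫⁻ y in E, ENNReal.ofReal ((truncMin A₀ M / truncMin A₀ (δ y)) ^ β₁))
      ≤ MeasureTheory.volume E + ∫⁻ y in E, ENNReal.ofReal ((M / δ y) ^ β₁) := h1
    _ ≤ ENNReal.ofReal (s ^ ((d:ℝ)) * v₁) + ENNReal.ofReal (B2 * s ^ ((d:ℝ))) :=
        add_le_add hEvol h2
    _ = ENNReal.ofReal (s ^ ((d:ℝ)) * v₁ + B2 * s ^ ((d:ℝ))) :=
        (ENNReal.ofReal_add (by positivity) (by positivity)).symm
    _ = ENNReal.ofReal ((v₁ + B2) * s ^ ((d:ℝ))) := by ring_nf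

set_option maxHeartbeats 1000000 in
theorem stmt8 {d : ℕ} (hd : 1 ≤ d) (D : Set (EuclideanSpace ℝ (Fin d)))
    (hDopen : IsOpen D) (hDne : D.Nonempty) (hfr : (frontier D).Nonempty)
    (Φ : ℝ → ℝ) (β₁ C_Φ : ℝ) (hβ₁ : 0 ≤ β₁) (hC_Φ : 1 ≤ C_Φ)
    (hΦ0 : Φ 0 = 1) (hΦ1 : ∀ r : ℝ, 0 ≤ r → 1 ≤ Φ r)
    (hΦmono : MonotoneOn Φ (Set.Ici 0)) (hΦcont : ContinuousOn Φ (Set.Ici 0))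
    (hΦscale : ∀ s r : ℝ, 0 < s → s ≤ r → Φ r ≤ C_Φ * (r / s) ^ β₁ * Φ s)
    (α : ℝ) (hα0 : 0 < α) (hα2 : α < 2) (A₀ : ℝ≥0∞) (hA₀ : 0 < A₀)
    (J : EuclideanSpace ℝ (Fin d) → EuclideanSpace ℝ (Fin d) → ℝ)
    (C₁ : ℝ) (hC₁ : 1 < C₁)
    (hJnn : ∀ x y, 0 ≤ J x y)
    (hJmeas : Measurable (Function.uncurry J))
    (hJsym : ∀ x ∈ D, ∀ y ∈ D, J x y = J y x)
    (hJbound : ∀ x ∈ D, ∀ y ∈ D, x ≠ y →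
      C₁⁻¹ * (dist x y ^ (-((d : ℝ) + α)) *
          Φ ((truncMin A₀ (dist x y)) ^ 2 /
            (truncMin A₀ (deltaD D x) * truncMin A₀ (deltaD D y)))) ≤ J x y ∧
      J x y ≤ C₁ * (dist x y ^ (-((d : ℝ) + α)) *
          Φ ((truncMin A₀ (dist x y)) ^ 2 /
            (truncMin A₀ (deltaD D x) * truncMin A₀ (deltaD D y)))))
    (hβd : 2 * β₁ ≤ (d : ℝ) + α) (q' : ℝ) (hβq' : β₁ < q') (hq'd : q' ≤ (d : ℝ))
    (hAik : Aikawa D q') :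
    ∃ C : ℝ, 0 < C ∧ ∀ x ∈ D, ∀ z ∈ D, ∀ r s : ℝ, 0 < r → 0 < s →
      (∫⁻ y in (D ∩ Metric.ball z s) \ Metric.ball x r, ENNReal.ofReal (J x y)) ≤
        ENNReal.ofReal (C * s ^ (d : ℝ) * r ^ (-((d : ℝ) + α)) *
          Φ ((truncMin A₀ r) ^ 2 /
            (truncMin A₀ (deltaD D x) * truncMin A₀ (max (deltaD D z) s)))) := by
  obtain ⟨C₀, hC₀, hAik'⟩ := hAik
  have hq'0 : 0 < q' := lt_of_le_of_lt hβ₁ hβq'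
  obtain ⟨K, hK0, hlayer⟩ := layer_bound hd D hfr q' C₀ hq'0 hq'd hC₀ hAik'
  obtain ⟨K2, hK20, hint⟩ := ratio_integral_bound hDopen hfr hA₀ hβ₁ hβq' hK0 hlayer
  have h2β : (0:ℝ) < 2 ^ β₁ := Real.rpow_pos_of_pos (by norm_num) _
  have hC₁0 : (0:ℝ) < C₁ := by linarith
  have hCΦ0 : (0:ℝ) < C_Φ := by linarith
  refine ⟨C₁ * C_Φ^2 * 2^β₁ * K2, by positivity, fun x hx z hz r s hr hs => ?_⟩
  set a := truncMin A₀ (deltaD D x) with ha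
  set M := max (deltaD D z) s with hM
  set m := truncMin A₀ M with hm
  set tr := truncMin A₀ r with htrd
  have hδx : 0 < deltaD D x := infDist_frontier_pos hDopen hfr hx
  have hδz : 0 < deltaD D z := infDist_frontier_pos hDopen hfr hz
  have ha0 : 0 < a := tm_pos hA₀ hδx
  have hM0 : 0 < M := lt_of_lt_of_le hs (le_max_right _ _)
  have hm0 : 0 < m := tm_pos hA₀ hM0
  have htr0 : 0 < tr := tm_pos hA₀ hr
  set Φt := Φ (tr^2 / (a * m)) with hΦt
  have hΦt1 : 1 ≤ Φt := by
    rw [hΦt]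
    exact hΦ1 _ (div_nonneg (pow_nonneg htr0.le 2) (mul_pos ha0 hm0).le)
  have hrd : (0:ℝ) < r ^ (-((d:ℝ)+α)) := Real.rpow_pos_of_pos hr _
  set cst2 := C₁ * C_Φ^2 * 2^β₁ * r ^ (-((d:ℝ)+α)) * Φt with hcst2
  have hcst20 : 0 ≤ cst2 := by positivity
  set S := (D ∩ Metric.ball z s) \ Metric.ball x r with hS
  have hSmeas : MeasurableSet S :=
    (hDopen.measurableSet.inter measurableSet_ball).diff measurableSet_ball
  have hpt : ∀ y ∈ S, ENNReal.ofReal (J x y) ≤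
      ENNReal.ofReal cst2 * ENNReal.ofReal ((m / truncMin A₀ (deltaD D y)) ^ β₁) := by
    intro y hy
    obtain ⟨⟨hyD, hyb⟩, hyout⟩ := hy
    have hrt : r ≤ dist x y := by
      have h1 : ¬ dist y x < r := fun h => hyout (Metric.mem_ball.2 h)
      rw [dist_comm]; exact not_lt.1 h1
    have ht0 : 0 < dist x y := lt_of_lt_of_le hr hrt
    have hxy : x ≠ y := dist_pos.1 ht0
    have hδy : 0 < deltaD D y := infDist_frontier_pos hDopen hfr hyD
    have hJ := (hJbound x hx y hyD hxy).2
    set t := dist x y with htdef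
    set b := truncMin A₀ (deltaD D y) with hb
    have hb0 : 0 < b := tm_pos hA₀ hδy
    -- step A : replace t by r in the kernel bound
    have htmt0 : 0 < truncMin A₀ t := tm_pos hA₀ ht0
    have htrle : tr ≤ truncMin A₀ t := tm_mono A₀ hrt
    have hab : (0:ℝ) < a * b := mul_pos ha0 hb0
    have hs₀ : 0 < tr^2 / (a*b) := div_pos (pow_pos htr0 2) hab
    have hsq : tr^2 ≤ (truncMin A₀ t)^2 := pow_le_pow_left₀ htr0.le htrle 2
    have hr₀le : tr^2/(a*b) ≤ (truncMin A₀ t)^2/(a*b) := by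
      rw [div_le_div_iff₀ hab hab]
      exact mul_le_mul_of_nonneg_right hsq hab.le
    have hA := hΦscale _ _ hs₀ hr₀le
    have hratio1 : ((truncMin A₀ t)^2/(a*b)) / (tr^2/(a*b)) = ((truncMin A₀ t)/tr)^2 := by
      rw [div_div_div_cancel_right₀]
      · rw [div_pow]
      · exact hab.ne'
    have hbase1 : (truncMin A₀ t)/tr ≤ t/r := by
      rw [div_le_div_iff₀ htr0 hr]
      have h2 := tm_mul_le A₀ hr hrt
      linarith
    have hbase2 : ((truncMin A₀ t)/tr)^2 ≤ (t/r)^2 :=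
      pow_le_pow_left₀ (div_nonneg htmt0.le htr0.le) hbase1 2
    have hrpow2 : (((t/r)^2 : ℝ))^β₁ = (t/r)^(2*β₁) := by
      rw [← Real.rpow_natCast (t/r) 2, ← Real.rpow_mul (div_nonneg ht0.le hr.le)]
      norm_num
    have hΦs0 : (0:ℝ) ≤ Φ (tr^2/(a*b)) := le_trans zero_le_one (hΦ1 _ hs₀.le)
    have hA1 : Φ ((truncMin A₀ t)^2/(a*b)) ≤ C_Φ * (t/r)^(2*β₁) * Φ (tr^2/(a*b)) := by
      refine hA.trans ?_
      rw [hratio1]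
      have h2 : (((truncMin A₀ t)/tr)^2)^β₁ ≤ ((t/r)^2)^β₁ :=
        Real.rpow_le_rpow (pow_nonneg (div_nonneg htmt0.le htr0.le) 2) hbase2 hβ₁
      rw [hrpow2] at h2
      exact mul_le_mul_of_nonneg_right
        (mul_le_mul_of_nonneg_left h2 hCΦ0.le) hΦs0
    have hA2 : t^(-((d:ℝ)+α)) * (t/r)^(2*β₁) ≤ r^(-((d:ℝ)+α)) := by
      have e1 : (t/r)^(2*β₁) = t^(2*β₁) * (r^(2*β₁))⁻¹ := by
        rw [Real.div_rpow ht0.le hr.le, div_eq_mul_inv]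
      have e2 : t^(-((d:ℝ)+α)) * t^(2*β₁) = t^(2*β₁ - ((d:ℝ)+α)) := by
        rw [← Real.rpow_add ht0]; congr 1; ring
      have e3 : t^(2*β₁-((d:ℝ)+α)) ≤ r^(2*β₁-((d:ℝ)+α)) :=
        Real.rpow_le_rpow_of_nonpos hr hrt (by linarith)
      have e4 : r^(2*β₁-((d:ℝ)+α)) * (r^(2*β₁))⁻¹ = r^(-((d:ℝ)+α)) := by
        rw [← Real.rpow_neg hr.le, ← Real.rpow_add hr]; congr 1; ring
      calc t^(-((d:ℝ)+α)) * (t/r)^(2*β₁)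
          = t^(-((d:ℝ)+α)) * t^(2*β₁) * (r^(2*β₁))⁻¹ := by rw [e1]; ring
        _ = t^(2*β₁-((d:ℝ)+α)) * (r^(2*β₁))⁻¹ := by rw [e2]
        _ ≤ r^(2*β₁-((d:ℝ)+α)) * (r^(2*β₁))⁻¹ := by
            apply mul_le_mul_of_nonneg_right e3
            positivity
        _ = r^(-((d:ℝ)+α)) := e4
    -- step B : replace b by m
    have hδy2M : deltaD D y ≤ 2*M := by
      have h3 : deltaD D y ≤ deltaD D z + dist y z := Metric.infDist_le_infDist_add_dist
      have h4 : dist y z < s := Metric.mem_ball.1 hyb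
      have h5 : deltaD D z ≤ M := le_max_left _ _
      have h6 : s ≤ M := le_max_right _ _
      linarith
    have hb2m : b ≤ 2*m := le_trans (tm_mono A₀ hδy2M) (tm_two_mul A₀ hM0.le)
    set c := tr^2/a with hc
    have hc0 : 0 < c := div_pos (pow_pos htr0 2) ha0
    have hs₁ : 0 < c/(2*m) := div_pos hc0 (by linarith)
    have hr₁ : c/(2*m) ≤ c/b := by
      rw [div_le_div_iff₀ (by linarith) hb0]
      exact mul_le_mul_of_nonneg_left hb2m hc0.le
    have hB := hΦscale _ _ hs₁ hr₁
    have hratio2 : (c/b)/(c/(2*m)) = 2*(m/b) := by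
      field_simp
    have hrw1 : tr^2/(a*b) = c/b := by rw [hc, div_div]
    have hrw2 : tr^2/(a*m) = c/m := by rw [hc, div_div]
    have hmono : Φ (c/(2*m)) ≤ Φ (c/m) := by
      apply hΦmono (Set.mem_Ici.2 hs₁.le)
        (Set.mem_Ici.2 (div_pos hc0 hm0).le)
      rw [div_le_div_iff₀ (by linarith) hm0]
      exact mul_le_mul_of_nonneg_left (by linarith) hc0.le
    have h2mb : (2*(m/b))^β₁ = 2^β₁ * (m/b)^β₁ :=
      Real.mul_rpow (by norm_num) (div_nonneg hm0.le hb0.le)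
    have hmb0 : (0:ℝ) ≤ (m/b)^β₁ := Real.rpow_nonneg (div_nonneg hm0.le hb0.le) _
    have hB1 : Φ (c/b) ≤ C_Φ * (2^β₁ * (m/b)^β₁) * Φ (c/m) := by
      refine hB.trans ?_
      rw [hratio2, h2mb]
      have hcc : (0:ℝ) ≤ C_Φ * (2^β₁ * (m/b)^β₁) := by positivity
      exact mul_le_mul_of_nonneg_left hmono hcc
    have hΦcb0 : (0:ℝ) ≤ Φ (c/b) := le_trans zero_le_one (hΦ1 _ (div_pos hc0 hb0).le)
    have htpow : 0 < t ^ (-((d:ℝ)+α)) := Real.rpow_pos_of_pos ht0 _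
    have hreal : J x y ≤ cst2 * ((m/b)^β₁) := by
      calc J x y ≤ C₁ * (t^(-((d:ℝ)+α)) * Φ ((truncMin A₀ t)^2/(a*b))) := hJ
        _ ≤ C₁ * (t^(-((d:ℝ)+α)) * (C_Φ * (t/r)^(2*β₁) * Φ (tr^2/(a*b)))) := by
            apply mul_le_mul_of_nonneg_left _ hC₁0.le
            exact mul_le_mul_of_nonneg_left hA1 htpow.le
        _ = C₁ * C_Φ * Φ (tr^2/(a*b)) * (t^(-((d:ℝ)+α)) * (t/r)^(2*β₁)) := by ring
        _ ≤ C₁ * C_Φ * Φ (tr^2/(a*b)) * r^(-((d:ℝ)+α)) := by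
            apply mul_le_mul_of_nonneg_left hA2
            have : (0:ℝ) ≤ Φ (tr^2/(a*b)) := hΦs0
            positivity
        _ = C₁ * C_Φ * r^(-((d:ℝ)+α)) * Φ (c/b) := by rw [hrw1]; ring
        _ ≤ C₁ * C_Φ * r^(-((d:ℝ)+α)) * (C_Φ * (2^β₁ * (m/b)^β₁) * Φ (c/m)) := by
            apply mul_le_mul_of_nonneg_left hB1
            positivity
        _ = cst2 * ((m/b)^β₁) := by
            rw [hcst2, hΦt, hrw2]; ring
    calc ENNReal.ofReal (J x y) ≤ ENNReal.ofReal (cst2 * ((m/b)^β₁)) :=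
          ENNReal.ofReal_le_ofReal hreal
      _ = ENNReal.ofReal cst2 * ENNReal.ofReal ((m/b)^β₁) := ENNReal.ofReal_mul hcst20
  have hfmeas : Measurable fun y => ENNReal.ofReal ((m / truncMin A₀ (deltaD D y)) ^ β₁) := by
    apply ENNReal.measurable_ofReal.comp
    exact (measurable_const.div
      (tm_measurable A₀ (Metric.continuous_infDist_pt (frontier D)).measurable)).pow_const _
  calc (∫⁻ y in S, ENNReal.ofReal (J x y))
      ≤ ∫⁻ y in S, ENNReal.ofReal cst2 *
          ENNReal.ofReal ((m / truncMin A₀ (deltaD D y)) ^ β₁) :=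
        setLIntegral_mono' hSmeas hpt
    _ = ENNReal.ofReal cst2 *
        ∫⁻ y in S, ENNReal.ofReal ((m / truncMin A₀ (deltaD D y)) ^ β₁) :=
        lintegral_const_mul _ hfmeas
    _ ≤ ENNReal.ofReal cst2 * ∫⁻ y in D ∩ Metric.ball z s,
          ENNReal.ofReal ((m / truncMin A₀ (deltaD D y)) ^ β₁) :=
        mul_le_mul_right (lintegral_mono_set Set.diff_subset) _
    _ ≤ ENNReal.ofReal cst2 * ENNReal.ofReal (K2 * s ^ ((d:ℝ))) :=
        mul_le_mul_right (hint z hz s hs) _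
    _ = ENNReal.ofReal (cst2 * (K2 * s ^ ((d:ℝ)))) := (ENNReal.ofReal_mul hcst20).symm
    _ = ENNReal.ofReal (C₁ * C_Φ^2 * 2^β₁ * K2 * s ^ ((d:ℝ)) * r ^ (-((d:ℝ)+α)) * Φt) := by
        rw [hcst2]; ring_nf
end

section
/- Assume α ∈ (0,2) and that J : D × D → [0,∞) is a symmetric Borel function with J(x,y) ≥ C₁^{−1} |x−y|^{−d−α} for all x, y ∈ D, where C₁ > 1. Then there exists C > 0 such that for every Borel function u ∈ L¹(D) ∩ L²(D) with ‖u‖_{L¹(D)} = 1, ‖u‖_{L²(D)}^{2(1+α/d)} ≤ C ( ∫_{D×D} (u(x)−u(y))² J(x,y) dx dy + R₀^{−α} ‖u‖_{L²(D)}² ), with the convention R₀^{−α} = 0 when R₀ = ∞. -/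
open MeasureTheory Metric Set ENNReal Filter

lemma sq_add_le_ennreal (A B : ℝ≥0∞) : (A + B) ^ 2 ≤ 4 * (A ^ 2 + B ^ 2) := by
  have h1 : A + B ≤ 2 * max A B := by
    rcases le_total A B with h | h
    · rw [max_eq_right h, two_mul]; exact add_le_add_left h B
    · rw [max_eq_left h, two_mul]; exact add_le_add_right h A
  have h2 : (A + B) ^ 2 ≤ (2 * max A B) ^ 2 := pow_le_pow_left₀ zero_le h1 2
  refine h2.trans ?_
  have h3 : (max A B) ^ 2 ≤ A ^ 2 + B ^ 2 := by
    rcases le_total A B with h | h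
    · rw [max_eq_right h]; exact le_add_self
    · rw [max_eq_left h]; exact le_add_right le_rfl
  calc (2 * max A B) ^ 2 = 4 * (max A B) ^ 2 := by ring
  _ ≤ 4 * (A ^ 2 + B ^ 2) := by exact mul_le_mul_right h3 4

lemma cs_ennreal {X : Type*} [MeasurableSpace X] (μ : Measure X) (f : X → ℝ≥0∞)
    (hf : AEMeasurable f μ) :
    (∫⁻ a, f a ∂μ) ^ 2 ≤ (∫⁻ a, f a ^ 2 ∂μ) * μ Set.univ := by
  have hpq : Real.HolderConjugate 2 2 := Real.holderConjugate_iff.mpr ⟨one_lt_two, by norm_num⟩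
  have h := ENNReal.lintegral_mul_le_Lp_mul_Lq μ hpq hf (g := 1) aemeasurable_const
  simp only [Pi.mul_apply, Pi.one_apply, mul_one, ENNReal.one_rpow, lintegral_const] at h
  have h2 : (∫⁻ a, f a ∂μ) ^ 2 ≤
      ((∫⁻ a, f a ^ (2:ℝ) ∂μ) ^ (1/(2:ℝ)) * (1 * μ Set.univ) ^ (1/(2:ℝ))) ^ 2 :=
    pow_le_pow_left₀ zero_le h 2
  refine h2.trans_eq ?_
  rw [mul_pow, ← ENNReal.rpow_natCast (_ ^ (1/(2:ℝ))) 2,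
    ← ENNReal.rpow_natCast ((1 * μ Set.univ) ^ (1/(2:ℝ))) 2,
    ← ENNReal.rpow_mul, ← ENNReal.rpow_mul]
  norm_num

lemma key_bound {d : ℕ} (hd : 1 ≤ d) {D : Set (EuclideanSpace ℝ (Fin d))} (hDopen : IsOpen D)
    {κ : ℝ} (hκ0 : 0 < κ) {R₀ : ℝ≥0∞}
    (hfat : ∀ x ∈ closure D, ∀ r : ℝ, 0 < r → ENNReal.ofReal r < R₀ →
      ∃ z ∈ D, Metric.ball z (κ * r) ⊆ D ∩ Metric.ball x r)
    {α : ℝ} (hα0 : 0 < α)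
    {J : EuclideanSpace ℝ (Fin d) → EuclideanSpace ℝ (Fin d) → ℝ}
    {C₁ : ℝ} (hC₁ : 1 < C₁)
    (hJmeas : Measurable (Function.uncurry J))
    (hJlow : ∀ x ∈ D, ∀ y ∈ D, C₁⁻¹ * dist x y ^ (-((d : ℝ) + α)) ≤ J x y)
    {u : EuclideanSpace ℝ (Fin d) → ℝ} (hu : Measurable u)
    (hL1 : (∫⁻ x in D, ENNReal.ofReal |u x|) = 1)
    {r : ℝ} (hr : 0 < r) (hrR₀ : ENNReal.ofReal r < R₀) :
    (∫⁻ x in D, ENNReal.ofReal (u x ^ 2)) ≤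
      ENNReal.ofReal (4 * C₁ * (κ ^ (2 * d))⁻¹ /
          (volume (Metric.ball (0 : EuclideanSpace ℝ (Fin d)) 1)).toReal) *
        (ENNReal.ofReal (r ^ α) *
            (∫⁻ p in D ×ˢ D, ENNReal.ofReal ((u p.1 - u p.2) ^ 2 * J p.1 p.2)
              ∂(volume.prod volume)) +
          ENNReal.ofReal (r ^ (-(d : ℝ)))) := by
  have hd0 : (0:ℝ) < d := by exact_mod_cast hd
  set V : ℝ≥0∞ := volume (Metric.ball (0 : EuclideanSpace ℝ (Fin d)) 1) with hVdef
  have hV0 : V ≠ 0 := (measure_ball_pos _ _ one_pos).ne'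
  have hVtop : V ≠ ⊤ := measure_ball_lt_top.ne
  set v : ℝ := V.toReal with hvdef
  have hv0 : 0 < v := ENNReal.toReal_pos hV0 hVtop
  have hVv : V = ENNReal.ofReal v := (ENNReal.ofReal_toReal hVtop).symm
  have hκr : 0 < κ * r := mul_pos hκ0 hr
  have hball : ∀ (z : EuclideanSpace ℝ (Fin d)) (s : ℝ), 0 < s →
      volume (Metric.ball z s) = ENNReal.ofReal (s ^ d) * V := by
    intro z s hs
    rw [hVdef, Measure.addHaar_ball_of_pos volume z hs, finrank_euclideanSpace_fin]
  set p : ℝ := (d:ℝ) + α with hpdef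
  have hp0 : 0 < p := by positivity
  have hC₁0 : (0:ℝ) < C₁ := by linarith
  set Etot : ℝ≥0∞ := ∫⁻ q in D ×ˢ D, ENNReal.ofReal ((u q.1 - u q.2) ^ 2 * J q.1 q.2)
      ∂(volume.prod volume) with hEdef
  set g : EuclideanSpace ℝ (Fin d) → ℝ≥0∞ := fun x =>
    ∫⁻ y in D ∩ Metric.ball x r, ENNReal.ofReal ((u x - u y) ^ 2 * J x y) with hgdef
  set h : EuclideanSpace ℝ (Fin d) → ℝ≥0∞ := fun x =>
    ∫⁻ y in D ∩ Metric.ball x r, ENNReal.ofReal |u y| with hhdef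
  set m : ℝ≥0∞ := ENNReal.ofReal ((κ * r) ^ d) * V with hmdef
  have hm0 : m ≠ 0 := by
    simp only [hmdef, ne_eq, mul_eq_zero, ENNReal.ofReal_eq_zero, not_or, not_le]
    exact ⟨by positivity, hV0⟩
  have hmtop : m ≠ ⊤ := ENNReal.mul_ne_top ENNReal.ofReal_ne_top hVtop
  set c1 : ℝ≥0∞ := ENNReal.ofReal (C₁ * r ^ p * (r ^ d * v)) with hc1def
  set c2 : ℝ≥0∞ := (m ^ 2)⁻¹ * 4 with hc2def
  have hc2top : c2 ≠ ⊤ := by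
    refine ENNReal.mul_ne_top ?_ (by norm_num)
    exact ENNReal.inv_ne_top.mpr (pow_ne_zero 2 hm0)
  -- pointwise bound
  have point : ∀ x ∈ D, ENNReal.ofReal (u x ^ 2) ≤ c2 * (c1 * g x + h x ^ 2) := by
    intro x hx
    obtain ⟨z, hzD, hzball⟩ := hfat x (subset_closure hx) r hr hrR₀
    have hmz : volume (Metric.ball z (κ * r)) = m := by rw [hball z _ hκr, hmdef]
    have step1 : ENNReal.ofReal |u x| * m ≤
        (∫⁻ y in D ∩ Metric.ball x r, ENNReal.ofReal |u x - u y|) + h x := by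
      have e1 : ENNReal.ofReal |u x| * m
          = ∫⁻ _ in Metric.ball z (κ * r), ENNReal.ofReal |u x| := by
        rw [setLIntegral_const, hmz]
      rw [e1]
      calc ∫⁻ _ in Metric.ball z (κ * r), ENNReal.ofReal |u x|
          ≤ ∫⁻ y in Metric.ball z (κ * r),
              (ENNReal.ofReal |u x - u y| + ENNReal.ofReal |u y|) := by
            refine lintegral_mono fun y => ?_
            rw [← ENNReal.ofReal_add (abs_nonneg _) (abs_nonneg _)]
            refine ENNReal.ofReal_le_ofReal ?_
            calc |u x| = |(u x - u y) + u y| := by ring_nf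
            _ ≤ |u x - u y| + |u y| := abs_add_le _ _
        _ = (∫⁻ y in Metric.ball z (κ * r), ENNReal.ofReal |u x - u y|)
            + ∫⁻ y in Metric.ball z (κ * r), ENNReal.ofReal |u y| :=
            lintegral_add_left ((measurable_const.sub hu).abs.ennreal_ofReal) _
        _ ≤ _ := add_le_add (lintegral_mono_set hzball) (lintegral_mono_set hzball)
    have step2 : (∫⁻ y in D ∩ Metric.ball x r, ENNReal.ofReal |u x - u y|) ^ 2 ≤
        (∫⁻ y in D ∩ Metric.ball x r, ENNReal.ofReal ((u x - u y) ^ 2))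
          * (ENNReal.ofReal (r ^ d) * V) := by
      have hcs := cs_ennreal (volume.restrict (D ∩ Metric.ball x r))
        (fun y => ENNReal.ofReal |u x - u y|)
        ((measurable_const.sub hu).abs.ennreal_ofReal.aemeasurable)
      simp only [Measure.restrict_apply_univ] at hcs
      refine hcs.trans ?_
      refine mul_le_mul' ?_ ?_
      · refine lintegral_mono fun y => ?_
        rw [← ENNReal.ofReal_pow (abs_nonneg _), sq_abs]
      · rw [← hball x r hr]
        exact measure_mono inter_subset_right
    have step3 : (∫⁻ y in D ∩ Metric.ball x r, ENNReal.ofReal ((u x - u y) ^ 2)) ≤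
        ENNReal.ofReal (C₁ * r ^ p) * g x := by
      have hmono : (∫⁻ y in D ∩ Metric.ball x r, ENNReal.ofReal ((u x - u y) ^ 2)) ≤
          ∫⁻ y in D ∩ Metric.ball x r,
            ENNReal.ofReal (C₁ * r ^ p) * ENNReal.ofReal ((u x - u y) ^ 2 * J x y) := by
        refine setLIntegral_mono' (hDopen.measurableSet.inter measurableSet_ball) ?_
        intro y hy
        rw [← ENNReal.ofReal_mul (by positivity)]
        refine ENNReal.ofReal_le_ofReal ?_
        by_cases hxy : y = x
        · subst hxy
          have : (u y - u y) ^ 2 = 0 := by ring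
          rw [this]
          have hJ : 0 ≤ J y y := le_trans (by positivity) (hJlow y hy.1 y hy.1)
          positivity
        · have hdxy : 0 < dist x y := dist_pos.mpr fun hh => hxy hh.symm
          have hlt : dist x y < r := by
            have := hy.2; rw [mem_ball] at this; rw [dist_comm]; exact this
          have h1 : r ^ (-p) ≤ dist x y ^ (-p) :=
            Real.rpow_le_rpow_of_nonpos hdxy hlt.le (by linarith)
          have h2 : C₁⁻¹ * r ^ (-p) ≤ J x y :=
            le_trans (mul_le_mul_of_nonneg_left h1 (inv_nonneg.mpr hC₁0.le))
              (hJlow x hx y hy.1)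
          have h3 : (u x - u y) ^ 2 * (C₁⁻¹ * r ^ (-p)) ≤ (u x - u y) ^ 2 * J x y :=
            mul_le_mul_of_nonneg_left h2 (sq_nonneg _)
          have hrp : r ^ p * r ^ (-p) = 1 := by
            rw [← Real.rpow_add hr]; simp
          have hcc : C₁ * C₁⁻¹ = 1 := mul_inv_cancel₀ (ne_of_gt hC₁0)
          have hid : C₁ * r ^ p * ((u x - u y) ^ 2 * (C₁⁻¹ * r ^ (-p))) = (u x - u y) ^ 2 := by
            calc C₁ * r ^ p * ((u x - u y) ^ 2 * (C₁⁻¹ * r ^ (-p)))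
                = (u x - u y) ^ 2 * ((C₁ * C₁⁻¹) * (r ^ p * r ^ (-p))) := by ring
            _ = (u x - u y) ^ 2 := by rw [hrp, hcc]; ring
          calc (u x - u y) ^ 2 = C₁ * r ^ p * ((u x - u y) ^ 2 * (C₁⁻¹ * r ^ (-p))) := hid.symm
          _ ≤ C₁ * r ^ p * ((u x - u y) ^ 2 * J x y) := by
              refine mul_le_mul_of_nonneg_left h3 ?_
              have := Real.rpow_nonneg hr.le p
              positivity
      refine hmono.trans_eq ?_
      exact lintegral_const_mul' _ _ ENNReal.ofReal_ne_top
    have hc1' : c1 = ENNReal.ofReal (C₁ * r ^ p) * (ENNReal.ofReal (r ^ d) * V) := by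
      rw [hc1def, hVv, ENNReal.ofReal_mul (mul_nonneg hC₁0.le (Real.rpow_nonneg hr.le p)),
        ENNReal.ofReal_mul (pow_nonneg hr.le d)]
    have habs : ENNReal.ofReal (u x ^ 2) * m ^ 2 = (ENNReal.ofReal |u x| * m) ^ 2 := by
      rw [← sq_abs (u x), ENNReal.ofReal_pow (abs_nonneg _)]; ring
    have big : ENNReal.ofReal (u x ^ 2) * m ^ 2 ≤ 4 * (c1 * g x + h x ^ 2) := by
      rw [habs]
      calc (ENNReal.ofReal |u x| * m) ^ 2
          ≤ ((∫⁻ y in D ∩ Metric.ball x r, ENNReal.ofReal |u x - u y|) + h x) ^ 2 :=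
            pow_le_pow_left₀ zero_le step1 2
      _ ≤ 4 * ((∫⁻ y in D ∩ Metric.ball x r, ENNReal.ofReal |u x - u y|) ^ 2 + h x ^ 2) :=
            sq_add_le_ennreal _ _
      _ ≤ 4 * (c1 * g x + h x ^ 2) := by
            refine mul_le_mul_right (add_le_add_left ?_ _) (4 : ℝ≥0∞)
            refine step2.trans ?_
            calc (∫⁻ y in D ∩ Metric.ball x r, ENNReal.ofReal ((u x - u y) ^ 2))
                  * (ENNReal.ofReal (r ^ d) * V)
                ≤ (ENNReal.ofReal (C₁ * r ^ p) * g x) * (ENNReal.ofReal (r ^ d) * V) :=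
                  mul_le_mul_left step3 _
            _ = c1 * g x := by
                rw [hc1']; ring
    have hdiv : ENNReal.ofReal (u x ^ 2) ≤ 4 * (c1 * g x + h x ^ 2) / m ^ 2 :=
      (ENNReal.le_div_iff_mul_le (Or.inl (pow_ne_zero 2 hm0))
        (Or.inl (ENNReal.pow_ne_top hmtop))).mpr big
    refine hdiv.trans_eq ?_
    rw [hc2def, div_eq_mul_inv]
    ring
  -- measurability setup
  have hJ' : Measurable fun q : EuclideanSpace ℝ (Fin d) × EuclideanSpace ℝ (Fin d) =>
      J q.1 q.2 := hJmeas
  have hsetmeas : MeasurableSet {q' : EuclideanSpace ℝ (Fin d) × EuclideanSpace ℝ (Fin d) |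
      dist q'.2 q'.1 < r} :=
    measurableSet_lt (measurable_snd.dist measurable_fst) measurable_const
  set G : EuclideanSpace ℝ (Fin d) × EuclideanSpace ℝ (Fin d) → ℝ≥0∞ := fun q =>
    {q' : EuclideanSpace ℝ (Fin d) × EuclideanSpace ℝ (Fin d) | dist q'.2 q'.1 < r}.indicator
      (fun q' => ENNReal.ofReal ((u q'.1 - u q'.2) ^ 2 * J q'.1 q'.2)) q with hGdef
  have hG_meas : Measurable G :=
    (((((hu.comp measurable_fst).sub (hu.comp measurable_snd)).pow_const 2).mul
      hJ').ennreal_ofReal).indicator hsetmeas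
  have hg_eq : ∀ x, g x = ∫⁻ y, G (x, y) ∂(volume.restrict D) := by
    intro x
    rw [hgdef]
    calc ∫⁻ y in D ∩ Metric.ball x r, ENNReal.ofReal ((u x - u y) ^ 2 * J x y)
        = ∫⁻ y in Metric.ball x r, ENNReal.ofReal ((u x - u y) ^ 2 * J x y)
            ∂(volume.restrict D) := by
          rw [Measure.restrict_restrict measurableSet_ball, Set.inter_comm (Metric.ball x r) D]
      _ = ∫⁻ y, (Metric.ball x r).indicator
            (fun y => ENNReal.ofReal ((u x - u y) ^ 2 * J x y)) y ∂(volume.restrict D) :=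
          (lintegral_indicator measurableSet_ball _).symm
      _ = ∫⁻ y, G (x, y) ∂(volume.restrict D) := by
          refine lintegral_congr fun y => ?_
          by_cases hyb : dist y x < r <;>
            simp [hGdef, Set.indicator_apply, Metric.mem_ball, hyb]
  have hg_meas : Measurable g := by
    have : g = fun x => ∫⁻ y, G (x, y) ∂(volume.restrict D) := funext hg_eq
    rw [this]
    exact hG_meas.lintegral_prod_right'
  have hg_int : (∫⁻ x in D, g x) ≤ Etot := by
    calc (∫⁻ x in D, g x) = ∫⁻ x, ∫⁻ y, G (x, y) ∂(volume.restrict D) ∂(volume.restrict D) :=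
        lintegral_congr hg_eq
    _ = ∫⁻ q, G q ∂((volume.restrict D).prod (volume.restrict D)) :=
        (lintegral_prod G hG_meas.aemeasurable).symm
    _ = ∫⁻ q in D ×ˢ D, G q ∂(volume.prod volume) := by rw [Measure.prod_restrict]
    _ ≤ Etot := by
        rw [hEdef]
        exact lintegral_mono fun q => Set.indicator_le_self _ _ q
  set H : EuclideanSpace ℝ (Fin d) × EuclideanSpace ℝ (Fin d) → ℝ≥0∞ := fun q =>
    {q' : EuclideanSpace ℝ (Fin d) × EuclideanSpace ℝ (Fin d) | dist q'.2 q'.1 < r}.indicator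
      (fun q' => ENNReal.ofReal |u q'.2|) q with hHdef
  have hH_meas : Measurable H :=
    ((hu.comp measurable_snd).abs.ennreal_ofReal).indicator hsetmeas
  have hh_eq : ∀ x, h x = ∫⁻ y, H (x, y) ∂(volume.restrict D) := by
    intro x
    rw [hhdef]
    calc ∫⁻ y in D ∩ Metric.ball x r, ENNReal.ofReal |u y|
        = ∫⁻ y in Metric.ball x r, ENNReal.ofReal |u y| ∂(volume.restrict D) := by
          rw [Measure.restrict_restrict measurableSet_ball, Set.inter_comm (Metric.ball x r) D]
      _ = ∫⁻ y, (Metric.ball x r).indicator (fun y => ENNReal.ofReal |u y|) y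
            ∂(volume.restrict D) := (lintegral_indicator measurableSet_ball _).symm
      _ = ∫⁻ y, H (x, y) ∂(volume.restrict D) := by
          refine lintegral_congr fun y => ?_
          by_cases hyb : dist y x < r <;>
            simp [hHdef, Set.indicator_apply, Metric.mem_ball, hyb]
  have hh_le : ∀ x, h x ≤ 1 := by
    intro x
    rw [hhdef, ← hL1]
    exact lintegral_mono_set inter_subset_left
  have hh_int : (∫⁻ x in D, h x) ≤ ENNReal.ofReal (r ^ d) * V := by
    calc (∫⁻ x in D, h x) = ∫⁻ x, ∫⁻ y, H (x, y) ∂(volume.restrict D) ∂(volume.restrict D) :=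
        lintegral_congr hh_eq
    _ = ∫⁻ y, ∫⁻ x, H (x, y) ∂(volume.restrict D) ∂(volume.restrict D) :=
        lintegral_lintegral_swap hH_meas.aemeasurable
    _ ≤ ∫⁻ y in D, (ENNReal.ofReal (r ^ d) * V) * ENNReal.ofReal |u y| := by
        refine lintegral_mono fun y => ?_
        have hHy : (fun x => H (x, y)) =
            (Metric.ball y r).indicator (fun _ => ENNReal.ofReal |u y|) := by
          funext x'
          by_cases hyb : dist x' y < r
          · have hmem : ((x', y) : EuclideanSpace ℝ (Fin d) × EuclideanSpace ℝ (Fin d)) ∈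
                {q' : EuclideanSpace ℝ (Fin d) × EuclideanSpace ℝ (Fin d) |
                  dist q'.2 q'.1 < r} := by
              simpa [dist_comm] using hyb
            exact (Set.indicator_of_mem hmem _).trans
              (Set.indicator_of_mem (Metric.mem_ball.mpr hyb) (fun _ => ENNReal.ofReal |u y|)).symm
          · have hmem : ((x', y) : EuclideanSpace ℝ (Fin d) × EuclideanSpace ℝ (Fin d)) ∉
                {q' : EuclideanSpace ℝ (Fin d) × EuclideanSpace ℝ (Fin d) |
                  dist q'.2 q'.1 < r} := by
              simpa [dist_comm] using hyb
            exact (Set.indicator_of_notMem hmem _).trans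
              (Set.indicator_of_notMem (fun hc => hyb (Metric.mem_ball.mp hc)) (fun _ => ENNReal.ofReal |u y|)).symm
        calc ∫⁻ x, H (x, y) ∂(volume.restrict D)
            = ∫⁻ x, (Metric.ball y r).indicator (fun _ => ENNReal.ofReal |u y|) x
                ∂(volume.restrict D) := by rw [hHy]
        _ = ENNReal.ofReal |u y| * (volume.restrict D) (Metric.ball y r) :=
            lintegral_indicator_const measurableSet_ball _
        _ ≤ ENNReal.ofReal |u y| * (ENNReal.ofReal (r ^ d) * V) := by
            refine mul_le_mul_right ?_ _
            rw [Measure.restrict_apply measurableSet_ball, ← hball y r hr]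
            exact measure_mono inter_subset_left
        _ = (ENNReal.ofReal (r ^ d) * V) * ENNReal.ofReal |u y| := mul_comm _ _
    _ = (ENNReal.ofReal (r ^ d) * V) * ∫⁻ y in D, ENNReal.ofReal |u y| :=
        lintegral_const_mul' _ _ (ENNReal.mul_ne_top ENNReal.ofReal_ne_top hVtop)
    _ = ENNReal.ofReal (r ^ d) * V := by rw [hL1, mul_one]
  have hh_sq : (∫⁻ x in D, h x ^ 2) ≤ ENNReal.ofReal (r ^ d) * V := by
    refine le_trans (lintegral_mono fun x => ?_) hh_int
    calc h x ^ 2 = h x * h x := pow_two (h x)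
    _ ≤ h x * 1 := mul_le_mul_right (hh_le x) _
    _ = h x := mul_one _
  have main : (∫⁻ x in D, ENNReal.ofReal (u x ^ 2)) ≤
      c2 * (c1 * Etot + ENNReal.ofReal (r ^ d) * V) := by
    calc (∫⁻ x in D, ENNReal.ofReal (u x ^ 2))
        ≤ ∫⁻ x in D, c2 * (c1 * g x + h x ^ 2) :=
          setLIntegral_mono' hDopen.measurableSet point
    _ = c2 * ∫⁻ x in D, (c1 * g x + h x ^ 2) := lintegral_const_mul' _ _ hc2top
    _ = c2 * ((∫⁻ x in D, c1 * g x) + ∫⁻ x in D, h x ^ 2) := by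
        rw [lintegral_add_left (hg_meas.const_mul c1)]
    _ = c2 * (c1 * (∫⁻ x in D, g x) + ∫⁻ x in D, h x ^ 2) := by
        rw [lintegral_const_mul' c1 _ ENNReal.ofReal_ne_top]
    _ ≤ c2 * (c1 * Etot + ENNReal.ofReal (r ^ d) * V) :=
        mul_le_mul_right (add_le_add (mul_le_mul_right hg_int _) hh_sq) _
  -- final constant algebra
  set A : ℝ := κ ^ (2 * d) with hAdef
  have hA0 : 0 < A := by positivity
  set c2r : ℝ := (((κ * r) ^ d * v) ^ 2)⁻¹ * 4 with hc2rdef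
  have hc2r0 : 0 < c2r := by positivity
  have hc2' : c2 = ENNReal.ofReal c2r := by
    rw [hc2def, hmdef, hVv, ← ENNReal.ofReal_mul (by positivity),
      ← ENNReal.ofReal_pow (by positivity),
      ← ENNReal.ofReal_inv_of_pos (by positivity), hc2rdef]
    rw [← ENNReal.ofReal_ofNat 4, ← ENNReal.ofReal_mul (by positivity)]
  set Kv : ℝ := 4 * C₁ * A⁻¹ / v with hKvdef
  have hKv0 : 0 < Kv := by positivity
  have hr2d : (0:ℝ) < r ^ (2 * d) := by positivity
  have esq : ((κ * r) ^ d * v) ^ 2 = A * (r ^ (2 * d) * v ^ 2) := by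
    rw [hAdef]
    ring
  have e1 : r ^ p * (r ^ d : ℝ) = r ^ (p + (d:ℝ)) := by
    rw [← Real.rpow_natCast r d, ← Real.rpow_add hr]
  have e2 : ((r:ℝ) ^ (2 * d))⁻¹ = r ^ (-(2 * (d:ℝ))) := by
    rw [← Real.rpow_natCast r (2 * d), ← Real.rpow_neg hr.le]
    norm_num
  have e3 : r ^ (p + (d:ℝ)) * r ^ (-(2 * (d:ℝ))) = r ^ α := by
    rw [← Real.rpow_add hr]
    congr 1
    rw [hpdef]; ring
  have key1 : c2r * (C₁ * r ^ p * ((r:ℝ) ^ d * v)) = Kv * r ^ α := by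
    rw [hc2rdef, esq, hKvdef]
    have : (A * (r ^ (2 * d) * v ^ 2))⁻¹ * 4 * (C₁ * r ^ p * ((r:ℝ) ^ d * v))
        = (4 * C₁ * A⁻¹ / v) * (r ^ p * (r ^ d : ℝ) * ((r:ℝ) ^ (2 * d))⁻¹) := by
      field_simp
    rw [this, e1, e2, e3]
  have e4 : (r:ℝ) ^ d * ((r:ℝ) ^ (2 * d))⁻¹ = r ^ (-(d:ℝ)) := by
    rw [← Real.rpow_natCast r d, e2, ← Real.rpow_add hr]
    congr 1
    ring
  have key2 : c2r * ((r:ℝ) ^ d * v) ≤ Kv * r ^ (-(d:ℝ)) := by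
    rw [hc2rdef, esq, hKvdef]
    have heq : (A * (r ^ (2 * d) * v ^ 2))⁻¹ * 4 * ((r:ℝ) ^ d * v)
        = (4 * A⁻¹ / v) * ((r:ℝ) ^ d * ((r:ℝ) ^ (2 * d))⁻¹) := by
      field_simp
    rw [heq, e4]
    have : 4 * A⁻¹ / v ≤ 4 * C₁ * A⁻¹ / v := by
      have h4 : (4:ℝ) * A⁻¹ ≤ 4 * C₁ * A⁻¹ := by
        have h44 : (4:ℝ) ≤ 4 * C₁ := by linarith
        have hAinv : (0:ℝ) ≤ A⁻¹ := by positivity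
        exact mul_le_mul_of_nonneg_right h44 hAinv
      exact (div_le_div_iff_of_pos_right hv0).mpr h4
    exact mul_le_mul_of_nonneg_right this (Real.rpow_nonneg hr.le _)
  refine main.trans ?_
  have hfin : c2 * (c1 * Etot + ENNReal.ofReal (r ^ d) * V) ≤
      ENNReal.ofReal Kv * (ENNReal.ofReal (r ^ α) * Etot + ENNReal.ofReal (r ^ (-(d:ℝ)))) := by
    rw [mul_add, mul_add]
    refine add_le_add ?_ ?_
    · have : c2 * (c1 * Etot) = ENNReal.ofReal (Kv * r ^ α) * Etot := by
        rw [hc2', hc1def, ← mul_assoc, ← ENNReal.ofReal_mul hc2r0.le, key1]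
      rw [this, ENNReal.ofReal_mul hKv0.le, mul_assoc]
    · have : c2 * (ENNReal.ofReal (r ^ d) * V) = ENNReal.ofReal (c2r * ((r:ℝ) ^ d * v)) := by
        rw [hc2', hVv, ← ENNReal.ofReal_mul (by positivity), ← ENNReal.ofReal_mul hc2r0.le]
      rw [this]
      refine le_trans (ENNReal.ofReal_le_ofReal key2) ?_
      rw [ENNReal.ofReal_mul hKv0.le]
  exact hfin.trans_eq (by rw [hKvdef, hAdef])

theorem stmt13 {d : ℕ} (hd : 1 ≤ d) (D : Set (EuclideanSpace ℝ (Fin d)))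
    (hDopen : IsOpen D) (hDne : D.Nonempty) (hfr : (frontier D).Nonempty)
    (κ : ℝ) (hκ0 : 0 < κ) (hκ1 : κ < 1) (R₀ : ℝ≥0∞) (hR₀0 : 0 < R₀)
    (hR₀diam : R₀ ≤ EMetric.diam D)
    (hfat : ∀ x ∈ closure D, ∀ r : ℝ, 0 < r → ENNReal.ofReal r < R₀ →
      ∃ z ∈ D, Metric.ball z (κ * r) ⊆ D ∩ Metric.ball x r)
    (α : ℝ) (hα0 : 0 < α) (hα2 : α < 2)
    (J : EuclideanSpace ℝ (Fin d) → EuclideanSpace ℝ (Fin d) → ℝ)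
    (C₁ : ℝ) (hC₁ : 1 < C₁)
    (hJnn : ∀ x y, 0 ≤ J x y)
    (hJmeas : Measurable (Function.uncurry J))
    (hJsym : ∀ x ∈ D, ∀ y ∈ D, J x y = J y x)
    (hJlow : ∀ x ∈ D, ∀ y ∈ D,
      C₁⁻¹ * dist x y ^ (-((d : ℝ) + α)) ≤ J x y) :
    ∃ C : ℝ, 0 < C ∧ ∀ u : EuclideanSpace ℝ (Fin d) → ℝ, Measurable u →
      (∫⁻ x in D, ENNReal.ofReal |u x|) = 1 →
      (∫⁻ x in D, ENNReal.ofReal (u x ^ 2)) < ⊤ →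
      (∫⁻ x in D, ENNReal.ofReal (u x ^ 2)) ^ (1 + α / (d : ℝ)) ≤
        ENNReal.ofReal C *
          ((∫⁻ p in D ×ˢ D, ENNReal.ofReal ((u p.1 - u p.2) ^ 2 * J p.1 p.2)
              ∂(MeasureTheory.volume.prod MeasureTheory.volume)) +
            R₀ ^ (-α) * ∫⁻ x in D, ENNReal.ofReal (u x ^ 2)) := by
  have hd0 : (0:ℝ) < d := by exact_mod_cast hd
  have hexp0 : 0 < 1 + α / (d:ℝ) := by positivity
  set v : ℝ := (volume (Metric.ball (0 : EuclideanSpace ℝ (Fin d)) 1)).toReal with hvdef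
  have hv0 : 0 < v := ENNReal.toReal_pos (measure_ball_pos _ _ one_pos).ne'
    measure_ball_lt_top.ne
  set Kv : ℝ := 4 * C₁ * (κ ^ (2 * d))⁻¹ / v with hKvdef
  have hKv0 : 0 < Kv := by
    have hC₁0 : (0:ℝ) < C₁ := by linarith
    positivity
  set c0 : ℝ := 2 * Kv with hc0def
  have hc00 : 0 < c0 := by positivity
  refine ⟨(c0 + 1) ^ (1 + α / (d:ℝ)), Real.rpow_pos_of_pos (by linarith) _, ?_⟩
  intro u hu hL1 hN
  set N : ℝ≥0∞ := ∫⁻ x in D, ENNReal.ofReal (u x ^ 2) with hNdef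
  set Etot : ℝ≥0∞ := ∫⁻ p in D ×ˢ D, ENNReal.ofReal ((u p.1 - u p.2) ^ 2 * J p.1 p.2)
      ∂(volume.prod volume) with hEdef
  by_cases hN0 : N = 0
  · rw [hN0, ENNReal.zero_rpow_of_pos hexp0]
    exact zero_le
  set n : ℝ := N.toReal with hndef
  have hn0 : 0 < n := ENNReal.toReal_pos hN0 hN.ne
  have hNn : N = ENNReal.ofReal n := (ENNReal.ofReal_toReal hN.ne).symm
  set r : ℝ := (c0 / n) ^ ((d:ℝ)⁻¹) with hrdef
  have hr0 : 0 < r := Real.rpow_pos_of_pos (by positivity) _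
  have hrd : r ^ (-(d:ℝ)) = n / c0 := by
    rw [hrdef, ← Real.rpow_mul (by positivity)]
    have : (d:ℝ)⁻¹ * (-(d:ℝ)) = -1 := by field_simp
    rw [this, Real.rpow_neg_one, inv_div]
  have hrα : r ^ α = (c0 / n) ^ (α / (d:ℝ)) := by
    rw [hrdef, ← Real.rpow_mul (by positivity)]
    congr 1
    field_simp
  have hLHS : N ^ (1 + α / (d:ℝ)) = ENNReal.ofReal (n ^ (1 + α / (d:ℝ))) := by
    rw [hNn, ENNReal.ofReal_rpow_of_pos hn0]
  have hc0C : c0 ^ (1 + α / (d:ℝ)) ≤ (c0 + 1) ^ (1 + α / (d:ℝ)) :=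
    Real.rpow_le_rpow hc00.le (by linarith) hexp0.le
  by_cases hcase : ENNReal.ofReal r < R₀
  · -- small r case : use the key bound
    have hkey := key_bound hd hDopen hκ0 hfat hα0 hC₁ hJmeas hJlow hu hL1 hr0 hcase
    rw [← hvdef, ← hKvdef, ← hEdef, ← hNdef] at hkey
    have h1 : N ≤ ENNReal.ofReal (Kv * r ^ α) * Etot + ENNReal.ofReal (n / 2) := by
      refine hkey.trans_eq ?_
      have e : Kv * (n / c0) = n / 2 := by
        rw [hc0def]
        field_simp
      rw [mul_add, hrd, ← ENNReal.ofReal_mul hKv0.le, ← mul_assoc,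
        ← ENNReal.ofReal_mul hKv0.le, e]
    have h2 : ENNReal.ofReal (n / 2) ≤ ENNReal.ofReal (Kv * r ^ α) * Etot := by
      have h3 : N - ENNReal.ofReal (n / 2) ≤ ENNReal.ofReal (Kv * r ^ α) * Etot :=
        tsub_le_iff_right.mpr h1
      refine le_trans ?_ h3
      rw [hNn, ← ENNReal.ofReal_sub n (by positivity)]
      exact ENNReal.ofReal_le_ofReal (by linarith)
    have h4 : ENNReal.ofReal (2 * n ^ (α / (d:ℝ))) * ENNReal.ofReal (n / 2) ≤
        ENNReal.ofReal (2 * n ^ (α / (d:ℝ))) * (ENNReal.ofReal (Kv * r ^ α) * Etot) :=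
      mul_le_mul_right h2 _
    have hid1 : ENNReal.ofReal (2 * n ^ (α / (d:ℝ))) * ENNReal.ofReal (n / 2) =
        N ^ (1 + α / (d:ℝ)) := by
      rw [hLHS, ← ENNReal.ofReal_mul (by positivity)]
      congr 1
      rw [Real.rpow_add hn0, Real.rpow_one]
      ring
    have hid2 : 2 * n ^ (α / (d:ℝ)) * (Kv * r ^ α) = c0 ^ (1 + α / (d:ℝ)) := by
      rw [hrα, Real.div_rpow hc00.le hn0.le, Real.rpow_add hc00, Real.rpow_one]
      have hnα : n ^ (α / (d:ℝ)) ≠ 0 := (Real.rpow_pos_of_pos hn0 _).ne'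
      field_simp [hc0def]
      ring
    calc N ^ (1 + α / (d:ℝ)) = ENNReal.ofReal (2 * n ^ (α / (d:ℝ))) * ENNReal.ofReal (n / 2) :=
        hid1.symm
    _ ≤ ENNReal.ofReal (2 * n ^ (α / (d:ℝ))) * (ENNReal.ofReal (Kv * r ^ α) * Etot) := h4
    _ = ENNReal.ofReal (2 * n ^ (α / (d:ℝ)) * (Kv * r ^ α)) * Etot := by
        rw [ENNReal.ofReal_mul (by positivity : (0:ℝ) ≤ 2 * n ^ (α / (d:ℝ))),
          ENNReal.ofReal_mul (by norm_num : (0:ℝ) ≤ 2)]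
        ring
    _ = ENNReal.ofReal (c0 ^ (1 + α / (d:ℝ))) * Etot := by rw [hid2]
    _ ≤ ENNReal.ofReal ((c0 + 1) ^ (1 + α / (d:ℝ))) * Etot :=
        mul_le_mul_left (ENNReal.ofReal_le_ofReal hc0C) _
    _ ≤ ENNReal.ofReal ((c0 + 1) ^ (1 + α / (d:ℝ))) * (Etot + R₀ ^ (-α) * N) :=
        mul_le_mul_right (le_add_right le_rfl) _
  · -- large r case : use the R₀ term
    have hcase' : R₀ ≤ ENNReal.ofReal r := not_lt.mp hcase
    have hrneg : r ^ (-α) = (n / c0) ^ (α / (d:ℝ)) := by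
      rw [Real.rpow_neg hr0.le, hrα, ← Real.inv_rpow (by positivity), inv_div]
    have hR₀inv : ENNReal.ofReal ((n / c0) ^ (α / (d:ℝ))) ≤ R₀ ^ (-α) := by
      have h1 : R₀ ^ α ≤ (ENNReal.ofReal r) ^ α := ENNReal.rpow_le_rpow hcase' hα0.le
      have h2 : ((ENNReal.ofReal r) ^ α)⁻¹ ≤ (R₀ ^ α)⁻¹ := ENNReal.inv_le_inv.mpr h1
      rw [ENNReal.rpow_neg]
      refine le_trans ?_ h2
      rw [ENNReal.ofReal_rpow_of_pos hr0,
        ← ENNReal.ofReal_inv_of_pos (Real.rpow_pos_of_pos hr0 α),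
        ← Real.rpow_neg hr0.le, hrneg]
    have hCc : c0 ^ (α / (d:ℝ)) ≤ (c0 + 1) ^ (1 + α / (d:ℝ)) := by
      have e1 : c0 ^ (α / (d:ℝ)) ≤ (c0 + 1) ^ (α / (d:ℝ)) :=
        Real.rpow_le_rpow hc00.le (by linarith) (by positivity)
      have e2 : (c0 + 1) ^ (1 + α / (d:ℝ)) = (c0 + 1) * (c0 + 1) ^ (α / (d:ℝ)) := by
        rw [Real.rpow_add (by linarith), Real.rpow_one]
      rw [e2]
      refine e1.trans ?_
      exact le_mul_of_one_le_left (Real.rpow_nonneg (by linarith) _) (by linarith)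
    have hreal : n ^ (1 + α / (d:ℝ)) ≤
        (c0 + 1) ^ (1 + α / (d:ℝ)) * ((n / c0) ^ (α / (d:ℝ)) * n) := by
      have hpos : 0 < n ^ (α / (d:ℝ)) := Real.rpow_pos_of_pos hn0 _
      have hc0p : 0 < c0 ^ (α / (d:ℝ)) := Real.rpow_pos_of_pos hc00 _
      have hmul := mul_le_mul_of_nonneg_right hCc
        (by positivity : (0:ℝ) ≤ n ^ (α / (d:ℝ)) * n)
      calc n ^ (1 + α / (d:ℝ)) = n * n ^ (α / (d:ℝ)) := by
            rw [Real.rpow_add hn0, Real.rpow_one]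
      _ = c0 ^ (α / (d:ℝ)) * (n ^ (α / (d:ℝ)) * n) / c0 ^ (α / (d:ℝ)) := by
            field_simp
      _ ≤ (c0 + 1) ^ (1 + α / (d:ℝ)) * (n ^ (α / (d:ℝ)) * n) / c0 ^ (α / (d:ℝ)) :=
            (div_le_div_iff_of_pos_right hc0p).mpr hmul
      _ = (c0 + 1) ^ (1 + α / (d:ℝ)) * ((n / c0) ^ (α / (d:ℝ)) * n) := by
            rw [Real.div_rpow hn0.le hc00.le]
            field_simp
    calc N ^ (1 + α / (d:ℝ)) = ENNReal.ofReal (n ^ (1 + α / (d:ℝ))) := hLHS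
    _ ≤ ENNReal.ofReal ((c0 + 1) ^ (1 + α / (d:ℝ)) * ((n / c0) ^ (α / (d:ℝ)) * n)) :=
        ENNReal.ofReal_le_ofReal hreal
    _ = ENNReal.ofReal ((c0 + 1) ^ (1 + α / (d:ℝ))) *
        (ENNReal.ofReal ((n / c0) ^ (α / (d:ℝ))) * ENNReal.ofReal n) := by
        rw [ENNReal.ofReal_mul (Real.rpow_nonneg (by linarith) _),
          ENNReal.ofReal_mul (Real.rpow_nonneg (by positivity) _)]
    _ ≤ ENNReal.ofReal ((c0 + 1) ^ (1 + α / (d:ℝ))) * (R₀ ^ (-α) * N) := by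
        rw [← hNn]
        exact mul_le_mul_right (mul_le_mul_left hR₀inv _) _
    _ ≤ ENNReal.ofReal ((c0 + 1) ^ (1 + α / (d:ℝ))) * (Etot + R₀ ^ (-α) * N) :=
        mul_le_mul_right (le_add_left le_rfl) _
end

section
/- Let J : D × D → [0,∞) be a symmetric Borel function and let 0 < ρ < ρ' ≤ diam(D). For r > 0 put J^{(r)}(x,y) := J(x,y) if |x−y| < r and J^{(r)}(x,y) := 0 otherwise. For n ≥ 1 define J_n(x,y) := J^{(ρ)}(x,y) + 1_{D_{1/n} × D_{1/n}}(x,y) (J^{(ρ')}(x,y) − J^{(ρ)}(x,y)). For a Borel function v : D → ℝ set E_n(v) := (1/2) ∫_{D×D} (v(x)−v(y))² J_n(x,y) dx dy and E'(v) := (1/2) ∫_{D×D} (v(x)−v(y))² J^{(ρ')}(x,y) dx dy. If (u_n)_{n≥1} ⊆ L²(D) converges weakly in L²(D) to u ∈ L²(D) (i.e., ∫_D u_n g dx → ∫_D u g dx for every g ∈ L²(D)), then liminf_{n→∞} E_n(u_n) ≥ E'(u). -/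
open MeasureTheory Metric Set ENNReal Filter

open Classical in
noncomputable def truncJ {d : ℕ}
    (J : EuclideanSpace ℝ (Fin d) → EuclideanSpace ℝ (Fin d) → ℝ) (r : ℝ)
    (x y : EuclideanSpace ℝ (Fin d)) : ℝ :=
  if dist x y < r then J x y else 0

open Classical in
noncomputable def JnKer {d : ℕ} (D : Set (EuclideanSpace ℝ (Fin d)))
    (J : EuclideanSpace ℝ (Fin d) → EuclideanSpace ℝ (Fin d) → ℝ) (ρ ρ' : ℝ) (n : ℕ)
    (x y : EuclideanSpace ℝ (Fin d)) : ℝ :=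
  truncJ J ρ x y +
    (if (x ∈ D ∧ 1 / (n : ℝ) < deltaD D x) ∧ (y ∈ D ∧ 1 / (n : ℝ) < deltaD D y) then
      truncJ J ρ' x y - truncJ J ρ x y else 0)

noncomputable def Eform {d : ℕ} (D : Set (EuclideanSpace ℝ (Fin d)))
    (K : EuclideanSpace ℝ (Fin d) → EuclideanSpace ℝ (Fin d) → ℝ)
    (v : EuclideanSpace ℝ (Fin d) → ℝ) : ℝ≥0∞ :=
  (1 / 2 : ℝ≥0∞) *
    ∫⁻ p in D ×ˢ D, ENNReal.ofReal ((v p.1 - v p.2) ^ 2 * K p.1 p.2)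
      ∂(MeasureTheory.volume.prod MeasureTheory.volume)

noncomputable def gdual {d : ℕ}
    (K : EuclideanSpace ℝ (Fin d) → EuclideanSpace ℝ (Fin d) → ℝ)
    (v : EuclideanSpace ℝ (Fin d) → ℝ) (x : EuclideanSpace ℝ (Fin d)) : ℝ :=
  (∫ y, (v x - v y) * K x y ∂volume) - ∫ y, (v y - v x) * K y x ∂volume

theorem coreLSC {d : ℕ} (D B : Set (EuclideanSpace ℝ (Fin d)))
    (hD : MeasurableSet D) (hB : MeasurableSet B) (hBD : B ⊆ D)
    (hBfin : volume B ≠ ⊤)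
    (K : EuclideanSpace ℝ (Fin d) → EuclideanSpace ℝ (Fin d) → ℝ)
    (hKmeas : Measurable fun p : EuclideanSpace ℝ (Fin d) × EuclideanSpace ℝ (Fin d) => K p.1 p.2)
    (hKnn : ∀ x y, 0 ≤ K x y) (M : ℝ) (hKle : ∀ x y, K x y ≤ M)
    (hKsupp : ∀ x y, K x y ≠ 0 → x ∈ B ∧ y ∈ B)
    (u : ℕ → EuclideanSpace ℝ (Fin d) → ℝ) (v : EuclideanSpace ℝ (Fin d) → ℝ)
    (humeas : ∀ n, Measurable (u n)) (hvmeas : Measurable v)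
    (huL2 : ∀ n, MemLp (u n) 2 (volume.restrict D))
    (hvL2 : MemLp v 2 (volume.restrict D))
    (hweak : ∀ g : EuclideanSpace ℝ (Fin d) → ℝ, Measurable g →
      MemLp g 2 (volume.restrict D) →
      Filter.Tendsto (fun n => ∫ x in D, u n x * g x) Filter.atTop
        (nhds (∫ x in D, v x * g x))) :
    (∫⁻ p in D ×ˢ D, ENNReal.ofReal ((v p.1 - v p.2) ^ 2 * K p.1 p.2)
        ∂(volume.prod volume)) ≤
      Filter.atTop.liminf (fun n =>
        ∫⁻ p in D ×ˢ D, ENNReal.ofReal ((u n p.1 - u n p.2) ^ 2 * K p.1 p.2)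
          ∂(volume.prod volume)) := by
  classical
  have hMnn : 0 ≤ M := (hKnn 0 0).trans (hKle 0 0)
  have hKzero : ∀ x y : EuclideanSpace ℝ (Fin d), (x ∉ B ∨ y ∉ B) → K x y = 0 := by
    intro x y h
    by_contra hne
    rcases hKsupp x y hne with ⟨h1, h2⟩
    tauto
  haveI : IsFiniteMeasure (volume.restrict B : Measure (EuclideanSpace ℝ (Fin d))) :=
    ⟨by rw [Measure.restrict_apply_univ]; exact hBfin.lt_top⟩
  -- L² facts on B
  have hL2B : ∀ f : EuclideanSpace ℝ (Fin d) → ℝ, MemLp f 2 (volume.restrict D) →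
      MemLp f 2 (volume.restrict B) := by
    intro f hf
    have := hf.restrict (μ := volume.restrict D) B
    rwa [Measure.restrict_restrict_of_subset hBD] at this
  have hIntB : ∀ f : EuclideanSpace ℝ (Fin d) → ℝ, MemLp f 2 (volume.restrict B) →
      Integrable f (volume.restrict B) := fun f hf => hf.integrable one_le_two
  have hind : ∀ f : EuclideanSpace ℝ (Fin d) → ℝ, Integrable f (volume.restrict B) →
      Integrable (B.indicator f) volume := fun f hf => (integrable_indicator_iff hB).mpr hf
  have habs_mul_le : ∀ a b : ℝ, |a * b| ≤ a ^ 2 + b ^ 2 := by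
    intro a b
    rw [abs_mul]
    nlinarith [sq_nonneg (|a| - |b|), sq_abs a, sq_abs b, abs_nonneg a, abs_nonneg b]
  -- basic indicator-integrable building blocks
  have h1 : Integrable (B.indicator fun _ => (1 : ℝ)) volume := hind _ (integrable_const 1)
  have hvB : MemLp v 2 (volume.restrict B) := hL2B v hvL2
  have hv1 : Integrable (B.indicator fun x => |v x|) volume := hind _ (hIntB v hvB).abs
  have hv2 : Integrable (B.indicator fun x => v x ^ 2) volume := hind _ hvB.integrable_sq
  have hu2 : ∀ n, Integrable (B.indicator fun x => u n x ^ 2) volume := fun n =>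
    hind _ (hL2B _ (huL2 n)).integrable_sq
  have hu1 : ∀ n, Integrable (B.indicator fun x => |u n x|) volume := fun n =>
    hind _ (hIntB _ (hL2B _ (huL2 n))).abs
  have huv : ∀ n, Integrable (B.indicator fun x => |u n x * v x|) volume := by
    intro n
    refine hind _ (Integrable.mono' (((hL2B _ (huL2 n)).integrable_sq).add hvB.integrable_sq)
      (((humeas n).mul hvmeas).abs.aestronglyMeasurable) (Eventually.of_forall fun x => ?_))
    rw [Real.norm_eq_abs, abs_abs]
    exact habs_mul_le _ _
  -- nonnegativity of indicator values
  have hindnn : ∀ (f : EuclideanSpace ℝ (Fin d) → ℝ), (∀ x, 0 ≤ f x) →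
      ∀ x, 0 ≤ B.indicator f x := fun f hf x => Set.indicator_nonneg (fun a _ => hf a) x
  -- generic 2D integrability by domination
  have hmono2 : ∀ f g : EuclideanSpace ℝ (Fin d) × EuclideanSpace ℝ (Fin d) → ℝ,
      Measurable f → Integrable g (volume.prod volume) → (∀ p, |f p| ≤ g p) →
      Integrable f (volume.prod volume) := fun f g hf hg hle =>
    hg.mono' hf.aestronglyMeasurable (Eventually.of_forall fun p => by
      rw [Real.norm_eq_abs]; exact hle p)
  -- integrability of (f x - f y)^2 K
  have hsq2 : ∀ f : EuclideanSpace ℝ (Fin d) → ℝ, Measurable f →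
      Integrable (B.indicator fun x => f x ^ 2) volume →
      Integrable (fun p : EuclideanSpace ℝ (Fin d) × EuclideanSpace ℝ (Fin d) =>
        (f p.1 - f p.2) ^ 2 * K p.1 p.2) (volume.prod volume) := by
    intro f hf hf2
    refine hmono2 _ (fun p => 2 * M * (B.indicator (fun x => f x ^ 2) p.1 *
        B.indicator (fun _ => (1 : ℝ)) p.2) + 2 * M * (B.indicator (fun _ => (1 : ℝ)) p.1 *
        B.indicator (fun x => f x ^ 2) p.2))
      (((hf.comp measurable_fst).sub (hf.comp measurable_snd)).pow_const 2 |>.mul hKmeas)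
      (((hf2.mul_prod h1).const_mul (2 * M)).add ((h1.mul_prod hf2).const_mul (2 * M)))
      fun p => ?_
    by_cases hk : K p.1 p.2 = 0
    · rw [hk, mul_zero, abs_zero]
      have i1 := hindnn _ (fun x => sq_nonneg (f x)) p.1
      have i2 := hindnn _ (fun x => sq_nonneg (f x)) p.2
      have i3 := hindnn (fun _ => (1 : ℝ)) (fun _ => zero_le_one) p.1
      have i4 := hindnn (fun _ => (1 : ℝ)) (fun _ => zero_le_one) p.2
      nlinarith [mul_nonneg i1 i4, mul_nonneg i3 i2]
    · obtain ⟨hx, hy⟩ := hKsupp _ _ hk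
      simp only [Set.indicator_of_mem hx, Set.indicator_of_mem hy]
      rw [abs_of_nonneg (mul_nonneg (sq_nonneg _) (hKnn _ _))]
      nlinarith [mul_le_mul_of_nonneg_left (hKle p.1 p.2) (sq_nonneg (f p.1 - f p.2)),
        mul_nonneg hMnn (sq_nonneg (f p.1 + f p.2))]
  -- integrability of f(x) * (v x - v y) K and f(y) * (v x - v y) K
  have habs3 : ∀ (a bb c k : ℝ), 0 ≤ k → k ≤ M → |a * ((bb - c) * k)| ≤
      M * (|a * bb| * 1) + M * (|a| * |c|) := by
    intro a bb c k hk0 hkM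
    have h3 : |bb - c| ≤ |bb| + |c| := abs_sub _ _
    calc |a * ((bb - c) * k)| = |a| * |bb - c| * k := by
          rw [abs_mul, abs_mul, abs_of_nonneg hk0]; ring
      _ ≤ |a| * (|bb| + |c|) * M := by
          have e1 : |a| * |bb - c| ≤ |a| * (|bb| + |c|) :=
            mul_le_mul_of_nonneg_left h3 (abs_nonneg _)
          exact mul_le_mul e1 hkM hk0 (by positivity)
      _ = M * (|a * bb| * 1) + M * (|a| * |c|) := by rw [abs_mul]; ring
  have hcross1 : ∀ f : EuclideanSpace ℝ (Fin d) → ℝ, Measurable f →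
      Integrable (B.indicator fun x => |f x|) volume →
      Integrable (B.indicator fun x => |f x * v x|) volume →
      Integrable (fun p : EuclideanSpace ℝ (Fin d) × EuclideanSpace ℝ (Fin d) =>
        f p.1 * ((v p.1 - v p.2) * K p.1 p.2)) (volume.prod volume) := by
    intro f hf hfa hfv
    refine hmono2 _ (fun p => M * (B.indicator (fun x => |f x * v x|) p.1 *
        B.indicator (fun _ => (1 : ℝ)) p.2) + M * (B.indicator (fun x => |f x|) p.1 *
        B.indicator (fun x => |v x|) p.2))
      ((hf.comp measurable_fst).mul
        (((hvmeas.comp measurable_fst).sub (hvmeas.comp measurable_snd)).mul hKmeas))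
      (((hfv.mul_prod h1).const_mul M).add ((hfa.mul_prod hv1).const_mul M))
      fun p => ?_
    by_cases hk : K p.1 p.2 = 0
    · rw [hk, mul_zero, mul_zero, abs_zero]
      have i1 := hindnn _ (fun x => abs_nonneg (f x * v x)) p.1
      have i2 := hindnn (fun _ => (1 : ℝ)) (fun _ => zero_le_one) p.2
      have i3 := hindnn _ (fun x => abs_nonneg (f x)) p.1
      have i4 := hindnn _ (fun x => abs_nonneg (v x)) p.2
      nlinarith [mul_nonneg i1 i2, mul_nonneg i3 i4]
    · obtain ⟨hx, hy⟩ := hKsupp _ _ hk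
      simp only [Set.indicator_of_mem hx, Set.indicator_of_mem hy]
      exact habs3 _ _ _ _ (hKnn _ _) (hKle _ _)
  have hcross2 : ∀ f : EuclideanSpace ℝ (Fin d) → ℝ, Measurable f →
      Integrable (B.indicator fun x => |f x|) volume →
      Integrable (B.indicator fun x => |f x * v x|) volume →
      Integrable (fun p : EuclideanSpace ℝ (Fin d) × EuclideanSpace ℝ (Fin d) =>
        f p.2 * ((v p.1 - v p.2) * K p.1 p.2)) (volume.prod volume) := by
    intro f hf hfa hfv
    refine hmono2 _ (fun p => M * (B.indicator (fun x => |v x|) p.1 *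
        B.indicator (fun x => |f x|) p.2) + M * (B.indicator (fun _ => (1 : ℝ)) p.1 *
        B.indicator (fun x => |f x * v x|) p.2))
      ((hf.comp measurable_snd).mul
        (((hvmeas.comp measurable_fst).sub (hvmeas.comp measurable_snd)).mul hKmeas))
      (((hv1.mul_prod hfa).const_mul M).add ((h1.mul_prod hfv).const_mul M))
      fun p => ?_
    by_cases hk : K p.1 p.2 = 0
    · rw [hk, mul_zero, mul_zero, abs_zero]
      have i1 := hindnn _ (fun x => abs_nonneg (v x)) p.1
      have i2 := hindnn _ (fun x => abs_nonneg (f x)) p.2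
      have i3 := hindnn (fun _ => (1 : ℝ)) (fun _ => zero_le_one) p.1
      have i4 := hindnn _ (fun x => abs_nonneg (f x * v x)) p.2
      nlinarith [mul_nonneg i1 i2, mul_nonneg i3 i4]
    · obtain ⟨hx, hy⟩ := hKsupp _ _ hk
      simp only [Set.indicator_of_mem hx, Set.indicator_of_mem hy]
      have := habs3 (f p.2) (v p.2) (v p.1) (K p.1 p.2) (hKnn _ _) (hKle _ _)
      calc |f p.2 * ((v p.1 - v p.2) * K p.1 p.2)|
          = |f p.2 * ((v p.2 - v p.1) * K p.1 p.2)| := by rw [abs_mul, abs_mul, abs_sub_comm,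
            ← abs_mul, ← abs_mul]
        _ ≤ M * (|f p.2 * v p.2| * 1) + M * (|f p.2| * |v p.1|) := this
        _ = M * (|v p.1| * |f p.2|) + M * (1 * |f p.2 * v p.2|) := by ring
  -- gdual : measurability
  have hg1meas : StronglyMeasurable fun x => ∫ y, (v x - v y) * K x y ∂volume := by
    apply MeasureTheory.StronglyMeasurable.integral_prod_right
      (f := fun x y => (v x - v y) * K x y)
    exact (((hvmeas.comp measurable_fst).sub (hvmeas.comp measurable_snd)).mul
      hKmeas).stronglyMeasurable
  have hg2meas : StronglyMeasurable fun x => ∫ y, (v y - v x) * K y x ∂volume := by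
    apply MeasureTheory.StronglyMeasurable.integral_prod_right
      (f := fun x y => (v y - v x) * K y x)
    exact (((hvmeas.comp measurable_snd).sub (hvmeas.comp measurable_fst)).mul
      (hKmeas.comp measurable_swap)).stronglyMeasurable
  have hgmeas : Measurable (gdual K v) := hg1meas.measurable.sub hg2meas.measurable
  -- gdual vanishes off B
  have hgzero : ∀ x, x ∉ B → gdual K v x = 0 := by
    intro x hx
    unfold gdual
    have e1 : (fun y => (v x - v y) * K x y) = fun _ => (0 : ℝ) :=
      funext fun y => by rw [hKzero x y (Or.inl hx), mul_zero]
    have e2 : (fun y => (v y - v x) * K y x) = fun _ => (0 : ℝ) :=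
      funext fun y => by rw [hKzero y x (Or.inr hx), mul_zero]
    rw [e1, e2]
    simp
  -- bound on gdual
  set VB : ℝ := (volume B).toReal with hVBdef
  set Cv : ℝ := ∫ y in B, |v y| with hCvdef
  have hVB0 : 0 ≤ VB := ENNReal.toReal_nonneg
  have hCv0 : 0 ≤ Cv := integral_nonneg fun y => abs_nonneg _
  have hIbnd : ∀ x : EuclideanSpace ℝ (Fin d),
      Integrable (fun y => M * B.indicator (fun y' => |v x| + |v y'|) y) volume := fun x =>
    (hind _ ((integrable_const _).add (hIntB v hvB).abs)).const_mul M
  have hval : ∀ x : EuclideanSpace ℝ (Fin d),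
      (∫ y, M * B.indicator (fun y' => |v x| + |v y'|) y ∂volume) = M * (VB * |v x| + Cv) := by
    intro x
    rw [integral_const_mul, integral_indicator hB,
      integral_add (integrable_const _) (hIntB v hvB).abs, integral_const,
      measureReal_restrict_apply_univ, measureReal_def, smul_eq_mul, ← hVBdef, ← hCvdef]
  have hptw1 : ∀ x y : EuclideanSpace ℝ (Fin d),
      |(v x - v y) * K x y| ≤ M * B.indicator (fun y' => |v x| + |v y'|) y := by
    intro x y
    by_cases hk : K x y = 0
    · rw [hk, mul_zero, abs_zero]
      exact mul_nonneg hMnn (hindnn _ (fun z => add_nonneg (abs_nonneg _) (abs_nonneg _)) y)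
    · rw [Set.indicator_of_mem (hKsupp _ _ hk).2, abs_mul, abs_of_nonneg (hKnn _ _)]
      calc |v x - v y| * K x y ≤ (|v x| + |v y|) * M :=
            mul_le_mul (abs_sub _ _) (hKle _ _) (hKnn _ _) (by positivity)
        _ = M * (|v x| + |v y|) := mul_comm _ _
  have hptw2 : ∀ x y : EuclideanSpace ℝ (Fin d),
      |(v y - v x) * K y x| ≤ M * B.indicator (fun y' => |v x| + |v y'|) y := by
    intro x y
    by_cases hk : K y x = 0
    · rw [hk, mul_zero, abs_zero]
      exact mul_nonneg hMnn (hindnn _ (fun z => add_nonneg (abs_nonneg _) (abs_nonneg _)) y)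
    · rw [Set.indicator_of_mem (hKsupp _ _ hk).1, abs_mul, abs_of_nonneg (hKnn _ _)]
      calc |v y - v x| * K y x ≤ (|v x| + |v y|) * M :=
            mul_le_mul ((abs_sub _ _).trans_eq (add_comm _ _)) (hKle _ _) (hKnn _ _)
              (by positivity)
        _ = M * (|v x| + |v y|) := mul_comm _ _
  have habs_g1 : ∀ x, |∫ y, (v x - v y) * K x y ∂volume| ≤ M * (VB * |v x| + Cv) := by
    intro x
    calc |∫ y, (v x - v y) * K x y ∂volume| ≤ ∫ y, |(v x - v y) * K x y| ∂volume := by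
          simpa only [Real.norm_eq_abs] using
            norm_integral_le_integral_norm (μ := volume) fun y => (v x - v y) * K x y
      _ ≤ ∫ y, M * B.indicator (fun y' => |v x| + |v y'|) y ∂volume :=
          integral_mono_of_nonneg (Eventually.of_forall fun y => abs_nonneg _) (hIbnd x)
            (Eventually.of_forall fun y => hptw1 x y)
      _ = M * (VB * |v x| + Cv) := hval x
  have habs_g2 : ∀ x, |∫ y, (v y - v x) * K y x ∂volume| ≤ M * (VB * |v x| + Cv) := by
    intro x
    calc |∫ y, (v y - v x) * K y x ∂volume| ≤ ∫ y, |(v y - v x) * K y x| ∂volume := by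
          simpa only [Real.norm_eq_abs] using
            norm_integral_le_integral_norm (μ := volume) fun y => (v y - v x) * K y x
      _ ≤ ∫ y, M * B.indicator (fun y' => |v x| + |v y'|) y ∂volume :=
          integral_mono_of_nonneg (Eventually.of_forall fun y => abs_nonneg _) (hIbnd x)
            (Eventually.of_forall fun y => hptw2 x y)
      _ = M * (VB * |v x| + Cv) := hval x
  have hgbnd : ∀ x, |gdual K v x| ≤ 2 * M * (VB * |v x| + Cv) := by
    intro x
    have h0 := abs_sub (∫ y, (v x - v y) * K x y ∂volume) (∫ y, (v y - v x) * K y x ∂volume)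
    have := habs_g1 x
    have := habs_g2 x
    unfold gdual
    linarith
  -- gdual is in L²(D)
  have hvabs : MemLp (fun x => |v x|) 2 (volume.restrict D) := by
    simpa [Real.norm_eq_abs] using hvL2.norm
  have hBD_ne : (volume.restrict D) B ≠ ⊤ := by
    rw [Measure.restrict_apply hB]
    exact ne_top_of_le_ne_top hBfin (measure_mono Set.inter_subset_left)
  have hhL2 : MemLp (fun x => 2 * M * VB * |v x| + B.indicator (fun _ => 2 * M * Cv) x) 2
      (volume.restrict D) :=
    (hvabs.const_mul _).add (memLp_indicator_const 2 hB _ (Or.inr hBD_ne))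
  have hgL2 : MemLp (gdual K v) 2 (volume.restrict D) := by
    refine hhL2.of_le hgmeas.aestronglyMeasurable (Eventually.of_forall fun x => ?_)
    rw [Real.norm_eq_abs, Real.norm_eq_abs]
    by_cases hx : x ∈ B
    · rw [Set.indicator_of_mem hx]
      calc |gdual K v x| ≤ 2 * M * (VB * |v x| + Cv) := hgbnd x
        _ = 2 * M * VB * |v x| + 2 * M * Cv := by ring
        _ ≤ |2 * M * VB * |v x| + 2 * M * Cv| := le_abs_self _
    · rw [Set.indicator_of_notMem hx, hgzero x hx, abs_zero, add_zero]
      exact abs_nonneg _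
  -- Fubini duality identity
  have key : ∀ f : EuclideanSpace ℝ (Fin d) → ℝ, Measurable f →
      ∀ (hi1 : Integrable (fun p : EuclideanSpace ℝ (Fin d) × EuclideanSpace ℝ (Fin d) =>
          f p.1 * ((v p.1 - v p.2) * K p.1 p.2)) (volume.prod volume))
        (hi2 : Integrable (fun p : EuclideanSpace ℝ (Fin d) × EuclideanSpace ℝ (Fin d) =>
          f p.2 * ((v p.1 - v p.2) * K p.1 p.2)) (volume.prod volume)),
      (∫ p, (f p.1 - f p.2) * ((v p.1 - v p.2) * K p.1 p.2) ∂(volume.prod volume))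
        = ∫ x in D, f x * gdual K v x := by
    intro f hf hi1 hi2
    have e0 : (∫ p, (f p.1 - f p.2) * ((v p.1 - v p.2) * K p.1 p.2) ∂(volume.prod volume))
        = (∫ p, f p.1 * ((v p.1 - v p.2) * K p.1 p.2) ∂(volume.prod volume))
          - ∫ p, f p.2 * ((v p.1 - v p.2) * K p.1 p.2) ∂(volume.prod volume) := by
      rw [← integral_sub hi1 hi2]
      congr 1
      funext p
      ring
    have e1 : (∫ p, f p.1 * ((v p.1 - v p.2) * K p.1 p.2) ∂(volume.prod volume))
        = ∫ x, f x * (∫ y, (v x - v y) * K x y ∂volume) ∂volume := by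
      rw [integral_prod _ hi1]
      congr 1
      funext x
      dsimp only
      rw [integral_const_mul]
    have e2 : (∫ p, f p.2 * ((v p.1 - v p.2) * K p.1 p.2) ∂(volume.prod volume))
        = ∫ x, f x * (∫ y, (v y - v x) * K y x ∂volume) ∂volume := by
      rw [← integral_prod_swap (fun p : EuclideanSpace ℝ (Fin d) × EuclideanSpace ℝ (Fin d) =>
        f p.2 * ((v p.1 - v p.2) * K p.1 p.2))]
      simp only [Prod.fst_swap, Prod.snd_swap]
      rw [integral_prod (fun z : EuclideanSpace ℝ (Fin d) × EuclideanSpace ℝ (Fin d) =>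
        f z.1 * ((v z.2 - v z.1) * K z.2 z.1)) hi2.swap]
      congr 1
      funext x
      dsimp only
      rw [integral_const_mul]
    have hifg1 : Integrable (fun x => f x * (∫ y, (v x - v y) * K x y ∂volume)) volume := by
      refine hi1.integral_prod_left.congr (Eventually.of_forall fun x => ?_)
      dsimp only
      rw [integral_const_mul]
    have hifg2 : Integrable (fun x => f x * (∫ y, (v y - v x) * K y x ∂volume)) volume := by
      refine hi2.swap.integral_prod_left.congr (Eventually.of_forall fun x => ?_)
      simp only [Function.comp_apply, Prod.swap_prod_mk]
      rw [integral_const_mul]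
    rw [e0, e1, e2, ← integral_sub hifg1 hifg2]
    have e3 : (fun x => f x * (∫ y, (v x - v y) * K x y ∂volume)
        - f x * (∫ y, (v y - v x) * K y x ∂volume)) = fun x => f x * gdual K v x := by
      funext x
      unfold gdual
      ring
    rw [e3]
    exact (setIntegral_eq_integral_of_forall_compl_eq_zero fun x hx => by
      rw [hgzero x fun hB' => hx (hBD hB'), mul_zero]).symm
  -- specific integrabilities
  have hvv : Integrable (B.indicator fun x => |v x * v x|) volume :=
    hind _ (hvB.integrable_sq.congr (Eventually.of_forall fun x => by
      simp only [abs_mul_self]; ring))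
  have huv' : ∀ n, Integrable (B.indicator fun x => |u n x * v x|) volume := huv
  have hiu1 : ∀ n, Integrable (fun p : EuclideanSpace ℝ (Fin d) × EuclideanSpace ℝ (Fin d) =>
      u n p.1 * ((v p.1 - v p.2) * K p.1 p.2)) (volume.prod volume) := fun n =>
    hcross1 (u n) (humeas n) (hu1 n) (huv n)
  have hiu2 : ∀ n, Integrable (fun p : EuclideanSpace ℝ (Fin d) × EuclideanSpace ℝ (Fin d) =>
      u n p.2 * ((v p.1 - v p.2) * K p.1 p.2)) (volume.prod volume) := fun n =>
    hcross2 (u n) (humeas n) (hu1 n) (huv n)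
  have hiv1 : Integrable (fun p : EuclideanSpace ℝ (Fin d) × EuclideanSpace ℝ (Fin d) =>
      v p.1 * ((v p.1 - v p.2) * K p.1 p.2)) (volume.prod volume) :=
    hcross1 v hvmeas hv1 hvv
  have hiv2 : Integrable (fun p : EuclideanSpace ℝ (Fin d) × EuclideanSpace ℝ (Fin d) =>
      v p.2 * ((v p.1 - v p.2) * K p.1 p.2)) (volume.prod volume) :=
    hcross2 v hvmeas hv1 hvv
  have hIv : Integrable (fun p : EuclideanSpace ℝ (Fin d) × EuclideanSpace ℝ (Fin d) =>
      (v p.1 - v p.2) ^ 2 * K p.1 p.2) (volume.prod volume) := hsq2 v hvmeas hv2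
  have hIu : ∀ n, Integrable (fun p : EuclideanSpace ℝ (Fin d) × EuclideanSpace ℝ (Fin d) =>
      (u n p.1 - u n p.2) ^ 2 * K p.1 p.2) (volume.prod volume) := fun n =>
    hsq2 (u n) (humeas n) (hu2 n)
  have hkeyu : ∀ n, (∫ p, (u n p.1 - u n p.2) * ((v p.1 - v p.2) * K p.1 p.2)
      ∂(volume.prod volume)) = ∫ x in D, u n x * gdual K v x := fun n =>
    key (u n) (humeas n) (hiu1 n) (hiu2 n)
  have hkeyv : (∫ p, (v p.1 - v p.2) * ((v p.1 - v p.2) * K p.1 p.2)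
      ∂(volume.prod volume)) = ∫ x in D, v x * gdual K v x := key v hvmeas hiv1 hiv2
  have hwv : (fun p : EuclideanSpace ℝ (Fin d) × EuclideanSpace ℝ (Fin d) =>
      (v p.1 - v p.2) * ((v p.1 - v p.2) * K p.1 p.2))
      = fun p => (v p.1 - v p.2) ^ 2 * K p.1 p.2 := funext fun p => by ring
  have hIvcross : Integrable (fun p : EuclideanSpace ℝ (Fin d) × EuclideanSpace ℝ (Fin d) =>
      (v p.1 - v p.2) * ((v p.1 - v p.2) * K p.1 p.2)) (volume.prod volume) := by
    rw [hwv]; exact hIv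
  -- the main inequality, for every n
  have hmain : ∀ n, 2 * (∫ x in D, u n x * gdual K v x) - (∫ x in D, v x * gdual K v x)
      ≤ ∫ p, (u n p.1 - u n p.2) ^ 2 * K p.1 p.2 ∂(volume.prod volume) := by
    intro n
    rw [← hkeyu n, ← hkeyv]
    have hIcross : Integrable (fun p : EuclideanSpace ℝ (Fin d) × EuclideanSpace ℝ (Fin d) =>
        (u n p.1 - u n p.2) * ((v p.1 - v p.2) * K p.1 p.2)) (volume.prod volume) :=
      ((hiu1 n).sub (hiu2 n)).congr (Eventually.of_forall fun p => by
        simp only [Pi.sub_apply]; ring)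
    have e : 2 * (∫ p, (u n p.1 - u n p.2) * ((v p.1 - v p.2) * K p.1 p.2)
          ∂(volume.prod volume))
        - (∫ p, (v p.1 - v p.2) * ((v p.1 - v p.2) * K p.1 p.2) ∂(volume.prod volume))
        = ∫ p, (2 * ((u n p.1 - u n p.2) * ((v p.1 - v p.2) * K p.1 p.2))
            - (v p.1 - v p.2) * ((v p.1 - v p.2) * K p.1 p.2)) ∂(volume.prod volume) := by
      rw [integral_sub (hIcross.const_mul 2) hIvcross, integral_const_mul]
    rw [e]
    refine integral_mono ((hIcross.const_mul 2).sub hIvcross) (hIu n) fun p => ?_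
    dsimp only
    nlinarith [mul_nonneg (sq_nonneg (u n p.1 - u n p.2 - (v p.1 - v p.2))) (hKnn p.1 p.2)]
  -- converting lintegrals to real integrals
  have hsuppf : ∀ f : EuclideanSpace ℝ (Fin d) → ℝ,
      Function.support (fun p : EuclideanSpace ℝ (Fin d) × EuclideanSpace ℝ (Fin d) =>
        ENNReal.ofReal ((f p.1 - f p.2) ^ 2 * K p.1 p.2)) ⊆ D ×ˢ D := by
    intro f p hp
    have hk : K p.1 p.2 ≠ 0 := by
      intro h0
      apply hp
      simp [h0]
    exact ⟨hBD (hKsupp _ _ hk).1, hBD (hKsupp _ _ hk).2⟩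
  have elhs : (∫⁻ p in D ×ˢ D, ENNReal.ofReal ((v p.1 - v p.2) ^ 2 * K p.1 p.2)
      ∂(volume.prod volume)) = ENNReal.ofReal (∫ x in D, v x * gdual K v x) := by
    rw [setLIntegral_eq_of_support_subset (hsuppf v),
      ← ofReal_integral_eq_lintegral_ofReal hIv
        (Eventually.of_forall fun p => mul_nonneg (sq_nonneg _) (hKnn _ _))]
    rw [← hwv, hkeyv]
  have erhs : ∀ n, (∫⁻ p in D ×ˢ D, ENNReal.ofReal ((u n p.1 - u n p.2) ^ 2 * K p.1 p.2)
      ∂(volume.prod volume)) = ENNReal.ofReal (∫ p, (u n p.1 - u n p.2) ^ 2 * K p.1 p.2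
        ∂(volume.prod volume)) := fun n => by
    rw [setLIntegral_eq_of_support_subset (hsuppf (u n)),
      ← ofReal_integral_eq_lintegral_ofReal (hIu n)
        (Eventually.of_forall fun p => mul_nonneg (sq_nonneg _) (hKnn _ _))]
  rw [elhs]
  simp only [erhs]
  have hweakg := hweak (gdual K v) hgmeas hgL2
  have ht : Tendsto (fun n => ENNReal.ofReal (2 * (∫ x in D, u n x * gdual K v x)
      - (∫ x in D, v x * gdual K v x))) atTop
      (nhds (ENNReal.ofReal (∫ x in D, v x * gdual K v x))) := by
    have h1 : Tendsto (fun n => 2 * (∫ x in D, u n x * gdual K v x)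
        - (∫ x in D, v x * gdual K v x)) atTop
        (nhds (2 * (∫ x in D, v x * gdual K v x) - (∫ x in D, v x * gdual K v x))) :=
      (hweakg.const_mul 2).sub_const _
    have h2 : 2 * (∫ x in D, v x * gdual K v x) - (∫ x in D, v x * gdual K v x)
        = ∫ x in D, v x * gdual K v x := by ring
    rw [h2] at h1
    exact (ENNReal.continuous_ofReal.tendsto _).comp h1
  calc ENNReal.ofReal (∫ x in D, v x * gdual K v x)
      = atTop.liminf (fun n => ENNReal.ofReal (2 * (∫ x in D, u n x * gdual K v x)
          - (∫ x in D, v x * gdual K v x))) := ht.liminf_eq.symm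
    _ ≤ atTop.liminf (fun n => ENNReal.ofReal (∫ p, (u n p.1 - u n p.2) ^ 2 * K p.1 p.2
          ∂(volume.prod volume))) :=
        liminf_le_liminf (Eventually.of_forall fun n => ENNReal.ofReal_le_ofReal (hmain n))

def Bkk {d : ℕ} (D : Set (EuclideanSpace ℝ (Fin d))) (k : ℕ) :
    Set (EuclideanSpace ℝ (Fin d)) :=
  {x | x ∈ D ∧ 1 / (k : ℝ) < deltaD D x ∧ ‖x‖ < (k : ℝ)}

open Classical in
noncomputable def Kkk {d : ℕ} (D : Set (EuclideanSpace ℝ (Fin d)))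
    (J : EuclideanSpace ℝ (Fin d) → EuclideanSpace ℝ (Fin d) → ℝ) (ρ' : ℝ) (k : ℕ)
    (x y : EuclideanSpace ℝ (Fin d)) : ℝ :=
  if x ∈ Bkk D k ∧ y ∈ Bkk D k then min (truncJ J ρ' x y) (k : ℝ) else 0

lemma constmul_liminf_le {a : ℝ≥0∞} {f : ℕ → ℝ≥0∞} :
    a * Filter.atTop.liminf f ≤ Filter.atTop.liminf fun n => a * f n := by
  rw [Filter.liminf_eq_iSup_iInf_of_nat, Filter.liminf_eq_iSup_iInf_of_nat, ENNReal.mul_iSup]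
  exact iSup_mono fun n => le_iInf₂ fun i hi => mul_le_mul_right (iInf₂_le i hi) a

set_option maxHeartbeats 2000000 in
theorem stmt14 {d : ℕ} (hd : 1 ≤ d) (D : Set (EuclideanSpace ℝ (Fin d)))
    (hDopen : IsOpen D) (hDne : D.Nonempty) (hfr : (frontier D).Nonempty)
    (J : EuclideanSpace ℝ (Fin d) → EuclideanSpace ℝ (Fin d) → ℝ)
    (hJnn : ∀ x y, 0 ≤ J x y)
    (hJmeas : Measurable (Function.uncurry J))
    (hJsym : ∀ x ∈ D, ∀ y ∈ D, J x y = J y x)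
    (ρ ρ' : ℝ) (hρ0 : 0 < ρ) (hρρ' : ρ < ρ')
    (hρ'diam : ENNReal.ofReal ρ' ≤ EMetric.diam D)
    (u : ℕ → EuclideanSpace ℝ (Fin d) → ℝ) (v : EuclideanSpace ℝ (Fin d) → ℝ)
    (humeas : ∀ n, Measurable (u n)) (hvmeas : Measurable v)
    (huL2 : ∀ n, MemLp (u n) 2 (MeasureTheory.volume.restrict D))
    (hvL2 : MemLp v 2 (MeasureTheory.volume.restrict D))
    (hweak : ∀ g : EuclideanSpace ℝ (Fin d) → ℝ, Measurable g →
      MemLp g 2 (MeasureTheory.volume.restrict D) →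
      Filter.Tendsto (fun n => ∫ x in D, u n x * g x) Filter.atTop
        (nhds (∫ x in D, v x * g x))) :
    Eform D (truncJ J ρ') v ≤
      Filter.atTop.liminf (fun n => Eform D (JnKer D J ρ ρ' (n + 1)) (u n)) := by
  classical
  have hDm : MeasurableSet D := hDopen.measurableSet
  have hdel : Continuous (deltaD D) := continuous_infDist_pt _
  -- measurability of Bkk
  have hBkm : ∀ k : ℕ, MeasurableSet (Bkk D k) := by
    intro k
    have e : Bkk D k = D ∩ (deltaD D ⁻¹' Set.Ioi (1 / (k : ℝ)))
        ∩ ((fun x : EuclideanSpace ℝ (Fin d) => ‖x‖) ⁻¹' Set.Iio (k : ℝ)) := by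
      ext x
      simp only [Bkk, Set.mem_inter_iff, Set.mem_setOf_eq, Set.mem_preimage, Set.mem_Ioi,
        Set.mem_Iio, and_assoc]
    rw [e]
    exact (hDm.inter (hdel.measurable measurableSet_Ioi)).inter
      (measurable_norm measurableSet_Iio)
  have hBfin : ∀ k : ℕ, volume (Bkk D k) ≠ ⊤ := by
    intro k
    have hsub : Bkk D k ⊆ Metric.ball (0 : EuclideanSpace ℝ (Fin d)) (k : ℝ) := by
      intro x hx
      exact mem_ball_zero_iff.mpr hx.2.2
    exact ((measure_mono hsub).trans_lt measure_ball_lt_top).ne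
  -- truncJ facts
  have htJ : ∀ r : ℝ, Measurable fun p : EuclideanSpace ℝ (Fin d) × EuclideanSpace ℝ (Fin d) =>
      truncJ J r p.1 p.2 := by
    intro r
    unfold truncJ
    exact Measurable.ite (measurableSet_lt measurable_dist measurable_const) hJmeas
      measurable_const
  have htJnn : ∀ (r : ℝ) x y, 0 ≤ truncJ J r x y := by
    intro r x y
    unfold truncJ
    split
    · exact hJnn x y
    · exact le_refl 0
  have htJle : ∀ x y, truncJ J ρ x y ≤ truncJ J ρ' x y := by
    intro x y
    unfold truncJ
    split_ifs with h1 h2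
    · exact le_refl _
    · exact absurd (h1.trans hρρ') h2
    · exact hJnn x y
    · exact le_refl 0
  -- Kkk facts
  have hKnnk : ∀ (k : ℕ) x y, 0 ≤ Kkk D J ρ' k x y := by
    intro k x y
    unfold Kkk
    split
    · exact le_min (htJnn ρ' x y) (Nat.cast_nonneg k)
    · exact le_refl 0
  have hKlek : ∀ (k : ℕ) x y, Kkk D J ρ' k x y ≤ (k : ℝ) := by
    intro k x y
    unfold Kkk
    split
    · exact min_le_right _ _
    · exact Nat.cast_nonneg k
  have hKle' : ∀ (k : ℕ) x y, Kkk D J ρ' k x y ≤ truncJ J ρ' x y := by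
    intro k x y
    unfold Kkk
    split
    · exact min_le_left _ _
    · exact htJnn ρ' x y
  have hKsuppk : ∀ (k : ℕ) x y, Kkk D J ρ' k x y ≠ 0 → x ∈ Bkk D k ∧ y ∈ Bkk D k := by
    intro k x y h
    by_contra hc
    exact h (by unfold Kkk; rw [if_neg hc])
  have hKmeask : ∀ k : ℕ, Measurable fun p :
      EuclideanSpace ℝ (Fin d) × EuclideanSpace ℝ (Fin d) => Kkk D J ρ' k p.1 p.2 := by
    intro k
    unfold Kkk
    exact Measurable.ite ((hBkm k).prod (hBkm k)) ((htJ ρ').min measurable_const)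
      measurable_const
  -- comparison with JnKer
  have hA : ∀ k n : ℕ, 1 ≤ k → k ≤ n → ∀ x y,
      Kkk D J ρ' k x y ≤ JnKer D J ρ ρ' n x y := by
    intro k n hk hkn x y
    unfold Kkk JnKer
    by_cases hc : x ∈ Bkk D k ∧ y ∈ Bkk D k
    · rw [if_pos hc]
      obtain ⟨⟨hxD, hxδ, _⟩, ⟨hyD, hyδ, _⟩⟩ := hc
      have h1n : 1 / (n : ℝ) ≤ 1 / (k : ℝ) :=
        one_div_le_one_div_of_le (by exact_mod_cast hk) (by exact_mod_cast hkn)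
      rw [if_pos ⟨⟨hxD, lt_of_le_of_lt h1n hxδ⟩, ⟨hyD, lt_of_le_of_lt h1n hyδ⟩⟩]
      have e : truncJ J ρ x y + (truncJ J ρ' x y - truncJ J ρ x y) = truncJ J ρ' x y := by
        ring
      rw [e]
      exact min_le_left _ _
    · rw [if_neg hc]
      have h2 : (0 : ℝ) ≤ (if (x ∈ D ∧ 1 / (n : ℝ) < deltaD D x) ∧
          (y ∈ D ∧ 1 / (n : ℝ) < deltaD D y) then truncJ J ρ' x y - truncJ J ρ x y else 0) := by
        split
        · exact sub_nonneg.mpr (htJle x y)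
        · exact le_refl 0
      exact add_nonneg (htJnn ρ x y) h2
  -- monotonicity in k
  have hKmono : ∀ x y, Monotone fun k : ℕ => Kkk D J ρ' k x y := by
    intro x y k l hkl
    simp only
    by_cases hc : x ∈ Bkk D k ∧ y ∈ Bkk D k
    · obtain ⟨⟨hxD, hxδ, hxn⟩, ⟨hyD, hyδ, hyn⟩⟩ := hc
      have hk1 : 0 < k := by
        rcases Nat.eq_zero_or_pos k with h | h
        · subst h
          simp only [Nat.cast_zero] at hxn
          exact absurd hxn (not_lt.mpr (norm_nonneg x))
        · exact h
      have hcast : (k : ℝ) ≤ (l : ℝ) := by exact_mod_cast hkl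
      have hδ : 1 / (l : ℝ) ≤ 1 / (k : ℝ) :=
        one_div_le_one_div_of_le (by exact_mod_cast hk1) hcast
      unfold Kkk
      rw [if_pos ⟨⟨hxD, hxδ, hxn⟩, ⟨hyD, hyδ, hyn⟩⟩,
        if_pos ⟨⟨hxD, lt_of_le_of_lt hδ hxδ, lt_of_lt_of_le hxn hcast⟩,
          ⟨hyD, lt_of_le_of_lt hδ hyδ, lt_of_lt_of_le hyn hcast⟩⟩]
      exact min_le_min (le_refl _) hcast
    · have e : Kkk D J ρ' k x y = 0 := by unfold Kkk; rw [if_neg hc]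
      rw [e]
      exact hKnnk l x y
  -- positivity of the distance to the boundary on D
  have hδpos : ∀ x ∈ D, 0 < deltaD D x := by
    intro x hx
    have hnot : x ∉ frontier D := by
      intro h
      have := h.2
      rw [hDopen.interior_eq] at this
      exact this hx
    exact (IsClosed.notMem_iff_infDist_pos isClosed_frontier hfr).mp hnot
  -- pointwise supremum
  have hsup : ∀ x ∈ D, ∀ y ∈ D, ∀ c : ℝ, 0 ≤ c →
      (⨆ k : ℕ, ENNReal.ofReal (c * Kkk D J ρ' k x y))
        = ENNReal.ofReal (c * truncJ J ρ' x y) := by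
    intro x hx y hy c hc
    apply le_antisymm
    · exact iSup_le fun k =>
        ENNReal.ofReal_le_ofReal (mul_le_mul_of_nonneg_left (hKle' k x y) hc)
    · have hδx := hδpos x hx
      have hδy := hδpos y hy
      obtain ⟨N, hN⟩ := exists_nat_gt (max (max (1 / deltaD D x) (1 / deltaD D y))
        (max (max ‖x‖ ‖y‖) (truncJ J ρ' x y)))
      have h1x : 1 / deltaD D x < N :=
        lt_of_le_of_lt ((le_max_left _ _).trans (le_max_left _ _)) hN
      have h1y : 1 / deltaD D y < N :=
        lt_of_le_of_lt ((le_max_right _ _).trans (le_max_left _ _)) hN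
      have hnx : ‖x‖ < N :=
        lt_of_le_of_lt ((le_max_left _ _).trans ((le_max_left _ _).trans (le_max_right _ _))) hN
      have hny : ‖y‖ < N :=
        lt_of_le_of_lt ((le_max_right _ _).trans ((le_max_left _ _).trans (le_max_right _ _))) hN
      have htj : truncJ J ρ' x y ≤ N :=
        le_of_lt (lt_of_le_of_lt ((le_max_right _ _).trans (le_max_right _ _)) hN)
      have hNpos : (0 : ℝ) < N := lt_trans (one_div_pos.mpr hδx) h1x
      have hδxN : 1 / (N : ℝ) < deltaD D x := (one_div_lt hNpos hδx).mpr h1x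
      have hδyN : 1 / (N : ℝ) < deltaD D y := (one_div_lt hNpos hδy).mpr h1y
      calc ENNReal.ofReal (c * truncJ J ρ' x y)
          = ENNReal.ofReal (c * Kkk D J ρ' N x y) := by
            have e : Kkk D J ρ' N x y = truncJ J ρ' x y := by
              unfold Kkk
              rw [if_pos ⟨⟨hx, hδxN, hnx⟩, ⟨hy, hδyN, hny⟩⟩, min_eq_left htj]
            rw [e]
        _ ≤ ⨆ k : ℕ, ENNReal.ofReal (c * Kkk D J ρ' k x y) :=
            le_iSup (fun k : ℕ => ENNReal.ofReal (c * Kkk D J ρ' k x y)) N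
  -- monotone convergence
  have hMCT : (∫⁻ p in D ×ˢ D,
        ENNReal.ofReal ((v p.1 - v p.2) ^ 2 * truncJ J ρ' p.1 p.2) ∂(volume.prod volume))
      = ⨆ k : ℕ, ∫⁻ p in D ×ˢ D,
          ENNReal.ofReal ((v p.1 - v p.2) ^ 2 * Kkk D J ρ' k p.1 p.2)
            ∂(volume.prod volume) := by
    rw [← lintegral_iSup (f := fun (k : ℕ)
        (p : EuclideanSpace ℝ (Fin d) × EuclideanSpace ℝ (Fin d)) =>
        ENNReal.ofReal ((v p.1 - v p.2) ^ 2 * Kkk D J ρ' k p.1 p.2))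
      (fun k => by exact ((((hvmeas.comp measurable_fst).sub
        (hvmeas.comp measurable_snd)).pow_const 2).mul (hKmeask k)).ennreal_ofReal)
      (fun k l hkl p => ENNReal.ofReal_le_ofReal
        (mul_le_mul_of_nonneg_left (hKmono p.1 p.2 hkl) (sq_nonneg _)))]
    refine setLIntegral_congr_fun (hDm.prod hDm) (fun p hp => ?_)
    exact (hsup p.1 hp.1 p.2 hp.2 _ (sq_nonneg _)).symm
  -- final assembly
  unfold Eform
  rw [hMCT, ENNReal.mul_iSup]
  refine iSup_le fun k => ?_
  rcases Nat.eq_zero_or_pos k with hk0 | hk1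
  · subst hk0
    have hz : ∀ p : EuclideanSpace ℝ (Fin d) × EuclideanSpace ℝ (Fin d),
        ENNReal.ofReal ((v p.1 - v p.2) ^ 2 * Kkk D J ρ' 0 p.1 p.2) = 0 := by
      intro p
      have e : Kkk D J ρ' 0 p.1 p.2 = 0 := by
        unfold Kkk
        rw [if_neg]
        rintro ⟨⟨-, -, h⟩, -⟩
        simp only [Nat.cast_zero] at h
        exact absurd h (not_lt.mpr (norm_nonneg p.1))
      rw [e, mul_zero, ENNReal.ofReal_zero]
    rw [lintegral_congr hz]
    simp
  · have hcore := coreLSC D (Bkk D k) hDm (hBkm k) (fun x hx => hx.1) (hBfin k)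
      (Kkk D J ρ' k) (hKmeask k) (hKnnk k) (k : ℝ) (hKlek k) (hKsuppk k)
      u v humeas hvmeas huL2 hvL2 hweak
    calc (1 / 2 : ℝ≥0∞) * ∫⁻ p in D ×ˢ D,
          ENNReal.ofReal ((v p.1 - v p.2) ^ 2 * Kkk D J ρ' k p.1 p.2)
            ∂(volume.prod volume)
        ≤ (1 / 2 : ℝ≥0∞) * Filter.atTop.liminf (fun n => ∫⁻ p in D ×ˢ D,
            ENNReal.ofReal ((u n p.1 - u n p.2) ^ 2 * Kkk D J ρ' k p.1 p.2)
              ∂(volume.prod volume)) := mul_le_mul_right hcore _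
      _ ≤ Filter.atTop.liminf (fun n => (1 / 2 : ℝ≥0∞) * ∫⁻ p in D ×ˢ D,
            ENNReal.ofReal ((u n p.1 - u n p.2) ^ 2 * Kkk D J ρ' k p.1 p.2)
              ∂(volume.prod volume)) := constmul_liminf_le
      _ ≤ Filter.atTop.liminf (fun n => Eform D (JnKer D J ρ ρ' (n + 1)) (u n)) := by
          have hev : ∀ᶠ n in Filter.atTop, (1 / 2 : ℝ≥0∞) * (∫⁻ p in D ×ˢ D,
              ENNReal.ofReal ((u n p.1 - u n p.2) ^ 2 * Kkk D J ρ' k p.1 p.2)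
                ∂(volume.prod volume)) ≤ Eform D (JnKer D J ρ ρ' (n + 1)) (u n) := by
            refine Filter.eventually_atTop.mpr ⟨k, fun n hn => ?_⟩
            have hle : ∀ p : EuclideanSpace ℝ (Fin d) × EuclideanSpace ℝ (Fin d),
                ENNReal.ofReal ((u n p.1 - u n p.2) ^ 2 * Kkk D J ρ' k p.1 p.2) ≤
                ENNReal.ofReal ((u n p.1 - u n p.2) ^ 2 * JnKer D J ρ ρ' (n + 1) p.1 p.2) :=
              fun p => ENNReal.ofReal_le_ofReal (mul_le_mul_of_nonneg_left
                (hA k (n + 1) hk1 (by omega) p.1 p.2) (sq_nonneg _))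
            exact mul_le_mul_right (lintegral_mono hle) _
          exact liminf_le_liminf hev
end
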